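/- arXiv:1011.5358 — 7 statements merged into one kernel-verified Lean document; each statement's English description precedes it below -/
import Mathlib

section
/- For m ≥ 2 even and t ≥ 1, the expected Coxeter length of a product of t independent uniformly random reflections in the dihedral group I_2(m) equals m/2. -/
open Classical DihedralGroup

/-- Minimal length of a word over `S` whose product is `w`. -/
noncomputable def wordLength {G : Type*} [Group G] (S : Set G) (w : G) : ℕ :=
  sInf {k | ∃ l : List G, l.length = k ∧ (∀ x ∈ l, x ∈ S) ∧ l.prod = w}

/-- The two Coxeter generators (simple reflections) of the dihedral group `I₂(m)`. -/
def dihedralGens (m : ℕ) : Set (DihedralGroup m) :=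
  {DihedralGroup.sr 0, DihedralGroup.sr 1}

/-- Coxeter length in the dihedral group `I₂(m)`. -/
noncomputable def dLen (m : ℕ) (w : DihedralGroup m) : ℕ :=
  wordLength (dihedralGens m) w

/-- The set of reflections (conjugates of the generators) in `I₂(m)`. -/
def dihedralRefl (m : ℕ) : Set (DihedralGroup m) :=
  {w | ∃ g s, s ∈ dihedralGens m ∧ w = g * s * g⁻¹}

/-- Expected Coxeter length of a product of `t` independent uniformly random
reflections in `I₂(m)`. -/
noncomputable def dihedralExpLen (m t : ℕ) [NeZero m] : ℝ :=
  (∑ f ∈ Finset.univ.filter (fun f : Fin t → DihedralGroup m => ∀ i, f i ∈ dihedralRefl m),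
      (dLen m (List.ofFn f).prod : ℝ)) /
    ((Finset.univ.filter (fun w : DihedralGroup m => w ∈ dihedralRefl m)).card : ℝ) ^ t

/-!
Write `m = 2n`. The reflections are exactly the `sr b`, so for `t ≥ 1` the product of `t` random
reflections is `sr b * w` with `b` uniform and independent of `w`, and it suffices that
`∑ b, ℓ(sr b * w) = m² / 2` for every `w`. The rotation `w₀ = r n` is central and is the longest
element: `ℓ(x * w₀) + ℓ(x) = m`. Since `sr (b + n) * w = (sr b * w) * w₀`, pairing `b` with
`b + n` gives the sum.

The length is computed in closed form (`coxLen`): it grows by at most one under left multiplication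
by a generator, so it bounds the word length from below, and alternating words attain it.
-/

theorem two_nsmul_sum_eq_of_add_shift {G M : Type*} [AddGroup G] [Fintype G] [AddCommMonoid M]
    (f : G → M) (c : G) (N : M) (h : ∀ x, f (x + c) + f x = N) :
    2 • ∑ x, f x = Fintype.card G • N := by
  calc 2 • ∑ x, f x = ∑ x, f (x + c) + ∑ x, f x := by
        rw [two_nsmul, ← Equiv.sum_comp (Equiv.addRight c) f]; rfl
    _ = Fintype.card G • N := by simp [← Finset.sum_add_distrib, h]

theorem Fintype.sum_fin_succ_pi {α M : Type*} [Fintype α] [AddCommMonoid M] {t : ℕ}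
    (g : (Fin (t + 1) → α) → M) :
    ∑ a, g a = ∑ a : Fin t → α, ∑ b, g (Fin.cons b a) := by
  rw [← Equiv.sum_comp (Fin.consEquiv fun _ => α), Fintype.sum_prod_type, Finset.sum_comm]
  rfl

section WordLength

variable {G : Type*} [Group G] {S : Set G}

theorem wordLength_prod_le {l : List G} (hl : ∀ x ∈ l, x ∈ S) :
    wordLength S l.prod ≤ l.length :=
  Nat.sInf_le ⟨l, rfl, hl, rfl⟩

theorem le_length_of_forall_mul_le {f : G → ℕ} (h1 : f 1 = 0)
    (hmul : ∀ s ∈ S, ∀ x, f (s * x) ≤ f x + 1) {l : List G} (hl : ∀ x ∈ l, x ∈ S) :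
    f l.prod ≤ l.length := by
  induction l with
  | nil => simp [h1]
  | cons a l ih =>
    rw [List.prod_cons, List.length_cons]
    have := hmul a (hl a List.mem_cons_self) l.prod
    have := ih fun x hx => hl x (List.mem_cons_of_mem a hx)
    omega

theorem wordLength_eq_of_forall_mul_le {f : G → ℕ} (h1 : f 1 = 0)
    (hmul : ∀ s ∈ S, ∀ x, f (s * x) ≤ f x + 1)
    (hword : ∀ w, ∃ l : List G, (∀ x ∈ l, x ∈ S) ∧ l.prod = w ∧ l.length ≤ f w) :
    wordLength S = f := by
  funext w
  obtain ⟨l, hl, rfl, hlen⟩ := hword w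
  refine le_antisymm ((wordLength_prod_le hl).trans hlen) (le_csInf ⟨_, l, rfl, hl, rfl⟩ ?_)
  rintro k ⟨l', rfl, hl', hprod⟩
  exact hprod ▸ le_length_of_forall_mul_le h1 hmul hl'

theorem exists_word_pow {a b : G} (ha : a ∈ S) (hb : b ∈ S) (j : ℕ) :
    ∃ l : List G, (∀ x ∈ l, x ∈ S) ∧ l.prod = (a * b) ^ j ∧ l.length = 2 * j := by
  refine ⟨(List.replicate j [a, b]).flatten, ?_, by simp, by simp [mul_comm]⟩
  simp only [List.mem_flatten, List.mem_replicate]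
  rintro x ⟨_, ⟨-, rfl⟩, hx⟩
  simp only [List.mem_cons, List.not_mem_nil, or_false] at hx
  rcases hx with rfl | rfl <;> assumption

theorem exists_word_pow_mul {a b : G} (ha : a ∈ S) (hb : b ∈ S) (j : ℕ) :
    ∃ l : List G, (∀ x ∈ l, x ∈ S) ∧ l.prod = (a * b) ^ j * a ∧ l.length = 2 * j + 1 := by
  obtain ⟨l, hl, hprod, hlen⟩ := exists_word_pow ha hb j
  refine ⟨l ++ [a], ?_, by simp [hprod], by simp [hlen]⟩
  simp only [List.mem_append, List.mem_singleton]
  rintro x (hx | rfl)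
  exacts [hl x hx, ha]

end WordLength

theorem ZMod.val_add_eq_or {n : ℕ} [NeZero n] (a b : ZMod n) :
    (a + b).val = a.val + b.val ∨ (a + b).val + n = a.val + b.val := by
  rcases lt_or_ge (a.val + b.val) n with h | h
  · exact .inl (ZMod.val_add_of_lt h)
  · have := ZMod.val_add_of_le h
    omega

namespace DihedralGroup

variable {m : ℕ}

/-- The Coxeter length in closed form, with `v = k.val`: the reduced words are `(s₀s₁)^v` or
`(s₁s₀)^(m-v)` for `r k`, and `(s₁s₀)^(v-1)s₁` or `(s₀s₁)^(m-v)s₀` for `sr k`, where `s₀ = sr 0`,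
`s₁ = sr 1`. At `k = 0` the truncated `v - 1 = 0` gives the length `1` of `sr 0`. -/
def coxLen : DihedralGroup m → ℕ
  | r k => 2 * min k.val (m - k.val)
  | sr k => 2 * min (k.val - 1) (m - k.val) + 1

theorem coxLen_one : coxLen (1 : DihedralGroup m) = 0 := by
  rw [one_def]
  simp [coxLen]

theorem commute_r_of_eq_two_mul {n : ℕ} (hm : m = 2 * n) (w : DihedralGroup m) :
    Commute (r (n : ZMod m)) w := by
  have hn : (n : ZMod m) + n = 0 := by
    rw [← two_mul, ← Nat.cast_ofNat, ← Nat.cast_mul, ← hm, ZMod.natCast_self]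
  rcases w with j | j
  · simp [Commute, SemiconjBy, add_comm]
  · simp [Commute, SemiconjBy, sub_eq_add_neg, neg_eq_of_add_eq_zero_left hn]

variable [NeZero m]

theorem coxLen_gen_mul_le {s : DihedralGroup m} (hs : s ∈ dihedralGens m) (x : DihedralGroup m) :
    coxLen (s * x) ≤ coxLen x + 1 := by
  have hval_one : m = 1 ∨ (1 : ZMod m).val = 1 := (eq_or_ne m 1).imp_right ZMod.val_one''
  rcases hs with rfl | rfl <;> rcases x with j | j
  all_goals
    simp only [sr_mul_r, sr_mul_sr, zero_add, sub_zero, coxLen]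
    have := ZMod.val_lt j
    have := ZMod.val_lt (1 : ZMod m)
  · omega
  · omega
  · have := ZMod.val_add_eq_or 1 j
    have := ZMod.val_lt (1 + j)
    omega
  · have := ZMod.val_lt (j - 1)
    have := ZMod.val_add_eq_or (j - 1) 1
    rw [sub_add_cancel] at this
    omega

theorem exists_word_coxLen (w : DihedralGroup m) :
    ∃ l : List (DihedralGroup m), (∀ x ∈ l, x ∈ dihedralGens m) ∧ l.prod = w ∧
      l.length ≤ coxLen w := by
  have h0 : sr 0 ∈ dihedralGens m := .inl rfl
  have h1 : sr 1 ∈ dihedralGens m := .inr rfl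
  have h01 : sr 0 * sr 1 = (r 1 : DihedralGroup m) := by simp
  have h10 : sr 1 * sr 0 = (r (-1) : DihedralGroup m) := by simp
  rcases w with k | k <;> have := ZMod.val_lt k <;> have := ZMod.val_lt (-k) <;>
    have hneg := ZMod.val_add_eq_or (-k) k <;> rw [neg_add_cancel, ZMod.val_zero] at hneg
  · rcases le_total k.val (-k).val with h | h
    · obtain ⟨l, hl, hprod, hlen⟩ := exists_word_pow h0 h1 k.val
      refine ⟨l, hl, by rw [hprod, h01, r_one_pow, ZMod.natCast_zmod_val], ?_⟩
      simp only [coxLen]; omega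
    · obtain ⟨l, hl, hprod, hlen⟩ := exists_word_pow h1 h0 (-k).val
      refine ⟨l, hl, by rw [hprod, h10, r_pow, ZMod.natCast_zmod_val]; simp, ?_⟩
      simp only [coxLen]; omega
  · have hsub := ZMod.val_add_eq_or (k - 1) 1
    rw [sub_add_cancel] at hsub
    have := ZMod.val_lt (k - 1)
    have := ZMod.val_lt (1 : ZMod m)
    have hval_one : m = 1 ∨ (1 : ZMod m).val = 1 := (eq_or_ne m 1).imp_right ZMod.val_one''
    rcases le_total (k - 1).val (-k).val with h | h
    · obtain ⟨l, hl, hprod, hlen⟩ := exists_word_pow_mul h1 h0 (k - 1).val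
      refine ⟨l, hl, by rw [hprod, h10, r_pow, ZMod.natCast_zmod_val, r_mul_sr]; simp, ?_⟩
      simp only [coxLen]; omega
    · obtain ⟨l, hl, hprod, hlen⟩ := exists_word_pow_mul h0 h1 (-k).val
      refine ⟨l, hl, by rw [hprod, h01, r_one_pow, ZMod.natCast_zmod_val, r_mul_sr]; simp, ?_⟩
      simp only [coxLen]; omega

theorem dLen_eq_coxLen : dLen m = coxLen :=
  wordLength_eq_of_forall_mul_le coxLen_one (fun _ hs x => coxLen_gen_mul_le hs x)
    exists_word_coxLen

theorem coxLen_mul_r_add_coxLen {n : ℕ} (hm : m = 2 * n) (w : DihedralGroup m) :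
    coxLen (w * r n) + coxLen w = m := by
  have hn : (n : ZMod m).val = n := ZMod.val_cast_of_lt (by have := NeZero.pos m; omega)
  rcases w with k | k <;> simp only [r_mul_r, sr_mul_r, coxLen] <;> have := ZMod.val_lt k <;>
    have := ZMod.val_lt (k + n : ZMod m) <;> have := ZMod.val_add_eq_or k (n : ZMod m) <;> omega

theorem two_mul_sum_dLen_sr_mul {n : ℕ} (hm : m = 2 * n) (w : DihedralGroup m) :
    2 * ∑ b : ZMod m, dLen m (sr b * w) = m * m := by
  have key := two_nsmul_sum_eq_of_add_shift (fun b => dLen m (sr b * w)) (n : ZMod m) m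
    fun b => by
      rw [← sr_mul_r, mul_assoc, (commute_r_of_eq_two_mul hm w).eq, ← mul_assoc, dLen_eq_coxLen,
        coxLen_mul_r_add_coxLen hm]
  simpa [ZMod.card] using key

theorem mem_dihedralRefl_iff {w : DihedralGroup m} : w ∈ dihedralRefl m ↔ ∃ k, sr k = w := by
  constructor
  · rintro ⟨g, s, hs, rfl⟩
    rcases hs with rfl | rfl <;> rcases g with j | j <;> exact ⟨_, rfl⟩
  · rintro ⟨k, rfl⟩
    have hconj (c i : ZMod m) : r (-c) * sr i * (r (-c))⁻¹ = sr (i + 2 * c) := by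
      rw [inv_r, neg_neg, r_mul_sr, sr_mul_r]
      congr 1
      ring
    rw [← ZMod.natCast_zmod_val k]
    obtain ⟨c, hc | hc⟩ := Nat.even_or_odd' k.val
    · exact ⟨r (-(c : ZMod m)), sr 0, .inl rfl, by rw [hconj, hc]; congr 1; push_cast; ring⟩
    · exact ⟨r (-(c : ZMod m)), sr 1, .inr rfl, by rw [hconj, hc]; congr 1; push_cast; ring⟩

theorem filter_mem_dihedralRefl_eq_image :
    Finset.univ.filter (· ∈ dihedralRefl m) = Finset.univ.image sr := by
  ext w
  simp [mem_dihedralRefl_iff]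

theorem card_filter_mem_dihedralRefl : (Finset.univ.filter (· ∈ dihedralRefl m)).card = m := by
  rw [filter_mem_dihedralRefl_eq_image, Finset.card_image_of_injective _ fun _ _ => sr.inj,
    Finset.card_univ, ZMod.card]

theorem sum_filter_forall_mem_dihedralRefl {M : Type*} [AddCommMonoid M] {t : ℕ}
    (g : (Fin t → DihedralGroup m) → M) :
    ∑ f ∈ Finset.univ.filter (fun f : Fin t → DihedralGroup m => ∀ i, f i ∈ dihedralRefl m), g f =
      ∑ a : Fin t → ZMod m, g fun i => sr (a i) := by
  have himage : Finset.univ.filter (fun f : Fin t → DihedralGroup m => ∀ i, f i ∈ dihedralRefl m) =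
      Finset.univ.image fun (a : Fin t → ZMod m) i => sr (a i) := by
    ext f
    simp [mem_dihedralRefl_iff, funext_iff, Classical.skolem]
  rw [himage, Finset.sum_image fun _ _ _ _ h => funext fun i => sr.inj (congrFun h i)]

end DihedralGroup

open DihedralGroup

theorem expected_length_reflections_dihedral_even_general (m t : ℕ) [NeZero m]
    (hme : Even m) (ht : 1 ≤ t) :
    dihedralExpLen m t = (m : ℝ) / 2 := by
  obtain ⟨n, hm⟩ := hme.two_dvd
  obtain ⟨t, rfl⟩ := Nat.exists_eq_add_of_le' ht
  have hsum : 2 * ∑ a : Fin (t + 1) → ZMod m, dLen m (List.ofFn fun i => sr (a i)).prod =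
      m ^ (t + 2) := by
    simp only [Fintype.sum_fin_succ_pi, Finset.mul_sum, List.ofFn_succ, Fin.cons_zero,
      Fin.cons_succ, List.prod_cons, two_mul_sum_dLen_sr_mul hm]
    simp [pow_succ, mul_assoc]
  have hm0 : (m : ℝ) ≠ 0 := Nat.cast_ne_zero.mpr (NeZero.ne m)
  rw [dihedralExpLen, sum_filter_forall_mem_dihedralRefl, card_filter_mem_dihedralRefl,
    div_eq_div_iff (pow_ne_zero _ hm0) two_ne_zero]
  exact_mod_cast (by rw [mul_comm, hsum]; ring)

theorem expected_length_reflections_dihedral_even (m t : ℕ) [NeZero m]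
    (hm : 2 ≤ m) (hme : Even m) (ht : 1 ≤ t) :
    dihedralExpLen m t = (m : ℝ) / 2 :=
  expected_length_reflections_dihedral_even_general m t hme ht
end

section
/- For the dihedral group I_2(m) and even t ≥ 0, the probability that a product of t independent uniformly random simple reflections equals the identity is (1/2^t) ∑_{|k| ≤ ⌊t/(2m)⌋} C(t, t/2 - km). -/
/-
The simple reflections are `sr 0` and `sr 1`, and `sr a * sr b = r (b - a)`. Hence a word of
even length `2n` with letters `a_i ∈ {0, 1}` multiplies to `r (-∑ (-1)^i a_i)`, which is the
identity iff `m` divides the alternating sum. Toggling the letters at odd positions is a bijection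
on words which turns the alternating sum into `(number of ones) - n`. So the count is `∑ C(2n, c)`
over `c ≡ n (mod m)`, and writing `c = n - k m` gives the stated sum.
-/

open Classical

/-- A uniformly random choice from the two simple reflections of `I₂(m)`,
encoded by a boolean. -/
def dihedralGen (m : ℕ) (b : Bool) : DihedralGroup m :=
  if b then DihedralGroup.sr 1 else DihedralGroup.sr 0

open Finset

namespace DihedralGroup

theorem prod_map_sr {n : ℕ} :
    ∀ l : List (ZMod n), (l.map sr).prod =
      if Even l.length then r (-l.alternatingSum) else sr l.alternatingSum
  | [] => by simp
  | a :: l => by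
    rw [List.map_cons, List.prod_cons, prod_map_sr l, List.alternatingSum_cons]
    by_cases h : Even l.length
    · simp [h, Nat.even_add_one, sub_eq_add_neg]
    · simp [h, Nat.even_add_one]

end DihedralGroup

theorem List.alternatingSum_ofFn {G : Type*} [AddCommGroup G] {t : ℕ} (v : Fin t → G) :
    (List.ofFn v).alternatingSum = ∑ i : Fin t, (-1 : ℤ) ^ (i : ℕ) • v i := by
  rw [List.alternatingSum_eq_finsetSum]
  exact Fintype.sum_equiv (finCongr (List.length_ofFn)) _ _ fun _ => by simp; rfl

theorem dihedralGen_eq_sr (m : ℕ) (b : Bool) :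
    dihedralGen m b = DihedralGroup.sr (b.toNat : ZMod m) := by
  cases b <;> simp [dihedralGen]

theorem prod_dihedralGen_eq_one_iff {m t : ℕ} (ht : Even t) (f : Fin t → Bool) :
    (List.ofFn fun i => dihedralGen m (f i)).prod = 1 ↔
      (m : ℤ) ∣ ∑ i : Fin t, (-1) ^ (i : ℕ) * ((f i).toNat : ℤ) := by
  have hlist : (List.ofFn fun i => dihedralGen m (f i)) =
      (List.ofFn fun i => ((f i).toNat : ZMod m)).map DihedralGroup.sr := by
    simp [List.map_ofFn, Function.comp_def, dihedralGen_eq_sr]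
  rw [hlist, DihedralGroup.prod_map_sr, List.length_ofFn, if_pos ht, DihedralGroup.one_def,
    DihedralGroup.r.injEq, neg_eq_zero, List.alternatingSum_ofFn,
    ← ZMod.intCast_zmod_eq_zero_iff_dvd]
  push_cast
  simp [zsmul_eq_mul]

def flipOdd {t : ℕ} (f : Fin t → Bool) : Fin t → Bool :=
  fun i => xor (f i) (decide (Odd (i : ℕ)))

theorem flipOdd_involutive (t : ℕ) : Function.Involutive (@flipOdd t) := fun f => by
  funext i; simp [flipOdd]

theorem sum_range_ite_odd (n : ℕ) :
    ∑ i ∈ range (2 * n), (if Odd i then 1 else 0 : ℤ) = n := by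
  induction n with
  | zero => simp
  | succ n ih =>
    rw [mul_add_one, sum_range_succ, sum_range_succ, ih]
    simp

theorem toNat_xor_decide_odd (b : Bool) (i : ℕ) :
    ((xor b (decide (Odd i))).toNat : ℤ) = (if Odd i then 1 else 0) + (-1) ^ i * b.toNat := by
  rcases Nat.even_or_odd i with h | h
  · cases b <;> simp [h.neg_one_pow, Nat.not_odd_iff_even.mpr h]
  · cases b <;> simp [h, h.neg_one_pow]

theorem card_flipOdd (n : ℕ) (f : Fin (2 * n) → Bool) :
    (#{i | flipOdd f i} : ℤ) =
      n + ∑ i : Fin (2 * n), (-1) ^ (i : ℕ) * ((f i).toNat : ℤ) := by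
  rw [← sum_range_ite_odd n, ← Fin.sum_univ_eq_sum_range, ← sum_add_distrib, card_filter]
  push_cast
  simp only [flipOdd, ← toNat_xor_decide_odd]
  exact sum_congr rfl fun i _ => by by_cases h : (f i ^^ decide (Odd (i : ℕ))) <;> simp [h]

theorem card_filter_card_true_eq_choose {α : Type*} [Fintype α] [DecidableEq α] (c : ℕ) :
    #{g : α → Bool | #{i | g i} = c} = (Fintype.card α).choose c := by
  rw [← card_univ, ← card_powersetCard]
  refine card_nbij' (fun g => ({i | g i} : Finset α)) (fun s i => decide (i ∈ s)) ?_ ?_ ?_ ?_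
  · intro g hg; simp_all [mem_powersetCard]
  · intro s hs; simp_all [mem_powersetCard]
  · intro g _; funext i; simp
  · intro s _; ext i; simp

theorem card_filter_card_true_eq_sum_choose {α : Type*} [Fintype α] [DecidableEq α]
    (P : ℕ → Prop) [DecidablePred P] :
    #{g : α → Bool | P #{i | g i}} =
      ∑ c ∈ range (Fintype.card α + 1) with P c, (Fintype.card α).choose c := by
  rw [card_eq_sum_card_fiberwise (f := fun g : α → Bool => #{i | g i})]
  · refine sum_congr rfl fun c hc => ?_
    rw [← card_filter_card_true_eq_choose, filter_filter]
    congr 1; ext g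
    simp only [mem_filter, mem_univ, true_and] at hc ⊢
    exact ⟨And.right, fun h => ⟨h ▸ hc.2, h⟩⟩
  · intro g hg
    simp_all [card_le_univ]

theorem mem_Icc_neg_div_iff_abs_mul_le {n m : ℕ} (hm : 0 < m) (k : ℤ) :
    k ∈ Icc (-((n / m : ℕ) : ℤ)) ((n / m : ℕ) : ℤ) ↔ |k * m| ≤ n := by
  rw [mem_Icc, ← abs_le, Int.natCast_div, Int.le_ediv_iff_mul_le (by exact_mod_cast hm),
    abs_mul, Nat.abs_cast]

theorem sum_Icc_choose_eq_sum_filter_dvd (n m : ℕ) :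
    ∑ k ∈ Icc (-((n / m : ℕ) : ℤ)) ((n / m : ℕ) : ℤ),
        (2 * n).choose ((n : ℤ) - k * m).toNat =
      ∑ c ∈ range (2 * n + 1) with (m : ℤ) ∣ ((c : ℕ) : ℤ) - n, (2 * n).choose c := by
  rcases Nat.eq_zero_or_pos m with rfl | hm
  -- `n / 0 = 0` and `0 ∣ x ↔ x = 0`, so both sides are `C(2n, n)`.
  · simp [sub_eq_zero, show n ≤ 2 * n by omega]
  refine sum_nbij' (fun k => ((n : ℤ) - k * m).toNat) (fun c => ((n : ℤ) - c) / m) ?_ ?_ ?_ ?_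
    (fun _ _ => rfl)
  · intro k hk
    rw [mem_Icc_neg_div_iff_abs_mul_le hm, abs_le] at hk
    simp only [mem_filter, mem_range]
    exact ⟨by omega, -k, by rw [Int.toNat_of_nonneg (by omega)]; ring⟩
  · intro c hc
    simp only [mem_filter, mem_range] at hc
    rw [mem_Icc_neg_div_iff_abs_mul_le hm, Int.ediv_mul_cancel (dvd_sub_comm.mp hc.2),
      abs_le]
    omega
  · intro k hk
    rw [mem_Icc_neg_div_iff_abs_mul_le hm, abs_le] at hk
    rw [show (n : ℤ) - ((n : ℤ) - k * m).toNat = k * m by omega]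
    exact Int.mul_ediv_cancel k (by exact_mod_cast hm.ne')
  · intro c hc
    simp only [mem_filter, mem_range] at hc
    rw [Int.ediv_mul_cancel (dvd_sub_comm.mp hc.2)]
    omega

theorem prod_dihedralGen_eq_one_iff_dvd_card_flipOdd (m n : ℕ) (f : Fin (2 * n) → Bool) :
    (List.ofFn fun i => dihedralGen m (f i)).prod = 1 ↔
      (m : ℤ) ∣ ((#{i | flipOdd f i} : ℕ) : ℤ) - n := by
  rw [prod_dihedralGen_eq_one_iff (even_two_mul n), card_flipOdd, add_sub_cancel_left]

theorem prob_product_simple_reflections_eq_one_general (m t : ℕ) (ht : Even t) :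
    ((Finset.univ.filter (fun f : Fin t → Bool =>
        (List.ofFn (fun i => dihedralGen m (f i))).prod = 1)).card : ℝ) / 2 ^ t
    = (1 / 2 ^ t) *
        ∑ k ∈ Finset.Icc (-((t / (2 * m) : ℕ) : ℤ)) ((t / (2 * m) : ℕ) : ℤ),
          (t.choose (((t / 2 : ℕ) : ℤ) - k * m).toNat : ℝ) := by
  obtain ⟨n, rfl⟩ := ht.two_dvd
  have hcard : #{f : Fin (2 * n) → Bool | (List.ofFn fun i => dihedralGen m (f i)).prod = 1} =
      ∑ k ∈ Icc (-((n / m : ℕ) : ℤ)) ((n / m : ℕ) : ℤ),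
        (2 * n).choose ((n : ℤ) - k * m).toNat := by
    rw [card_equiv (t := {g | (m : ℤ) ∣ ((#{i | g i} : ℕ) : ℤ) - n})
        (flipOdd_involutive _).toPerm
        fun f => by simp [prod_dihedralGen_eq_one_iff_dvd_card_flipOdd],
      card_filter_card_true_eq_sum_choose fun c => (m : ℤ) ∣ (c : ℤ) - n, Fintype.card_fin,
      sum_Icc_choose_eq_sum_filter_dvd]
  rw [Nat.mul_div_cancel_left n two_pos, Nat.mul_div_mul_left n m two_pos, hcard]
  push_cast
  ring

theorem prob_product_simple_reflections_eq_one (m t : ℕ) (hm : 2 ≤ m) (ht : Even t) :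
    ((Finset.univ.filter (fun f : Fin t → Bool =>
        (List.ofFn (fun i => dihedralGen m (f i))).prod = 1)).card : ℝ) / 2 ^ t
    = (1 / 2 ^ t) *
        ∑ k ∈ Finset.Icc (-((t / (2 * m) : ℕ) : ℤ)) ((t / (2 * m) : ℕ) : ℤ),
          (t.choose (((t / 2 : ℕ) : ℤ) - k * m).toNat : ℝ) :=
  prob_product_simple_reflections_eq_one_general m t ht
end

section
/- For n ≥ 2 and t ≥ 0, the expected number of inversions of a product of t independent uniformly random transpositions in the symmetric group S_n equals n(n-1)/4 - ((n+1)(n-1)/6)(1 - 2/(n-1))^t - ((n-1)(n-2)/12)(1 - 4/(n-1))^t. -/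
open Classical

/-- The number of inversions of a permutation of `{0, …, n-1}`. -/
noncomputable def invCount (n : ℕ) (π : Equiv.Perm (Fin n)) : ℕ :=
  (Finset.univ.filter (fun p : Fin n × Fin n => p.1 < p.2 ∧ π p.2 < π p.1)).card

/-- Expected number of inversions of a product of `t` independent uniformly
random transpositions in the symmetric group `Sₙ`. -/
noncomputable def expInv (n t : ℕ) : ℝ :=
  (∑ f ∈ Finset.univ.filter (fun f : Fin t → Equiv.Perm (Fin n) => ∀ i, (f i).IsSwap),
      (invCount n (List.ofFn f).prod : ℝ)) /
    ((Finset.univ.filter (fun σ : Equiv.Perm (Fin n) => σ.IsSwap)).card : ℝ) ^ t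

/-!
Since `(List.ofFn f).prod = f 0 * (f 1 * ⋯)`, one more transposition acts on the left, so
for positions `p < q` the values `(π p, π q)` move by `(x, y) ↦ (τ x, τ y)`. Summing over the
`C(n,2)` transpositions `τ`, for `x ≠ y`,
  `∑ τ, [τ y < τ x] = n + x - y + n(n-5)/2 · [y < x]`,
  `∑ τ, (τ x - τ y) = n(n-3)/2 · (x - y)`.
Summed over `p < q`, the inversion count `I` and the displacement `D π = ∑_{p<q} (π p - π q)`
obey the triangular linear recursion
  `∑ τ, D (τ π) = n(n-3)/2 · D π`,
  `∑ τ, I (τ π) = n(n-5)/2 · I π + n · C(n,2) + D π`,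
solved from `I 1 = 0` and `D 1 = -(n+1)n(n-1)/6`. Dividing by `C(n,2)^t`, the eigenvalues
`n(n-3)/2` and `n(n-5)/2` become `1 - 2/(n-1)` and `1 - 4/(n-1)`.
-/

open Finset Equiv

namespace Fintype

theorem sum_eq_add_add_sum_compl_pair {α M : Type*} [Fintype α] [DecidableEq α]
    [AddCommMonoid M] {x y : α} (hxy : x ≠ y) (f : α → M) :
    ∑ z, f z = f x + f y + ∑ z ∈ {x, y}ᶜ, f z := by
  rw [← sum_add_sum_compl {x, y}, sum_pair hxy]

end Fintype

namespace Finset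

theorem cast_card_compl_pair {α R : Type*} [Fintype α] [DecidableEq α] [AddGroupWithOne R]
    {x y : α} (hxy : x ≠ y) : (#({x, y}ᶜ : Finset α) : R) = Fintype.card α - 2 := by
  rw [card_compl, card_pair hxy, Nat.cast_sub (card_pair hxy ▸ card_le_univ _), Nat.cast_ofNat]

theorem sum_range_cast_id (m : ℕ) : ∑ i ∈ range m, (i : ℝ) = m * (m - 1) / 2 := by
  induction m with
  | zero => simp
  | succ m ih =>
    rw [sum_range_succ, ih]
    push_cast
    ring

end Finset

namespace Equiv

variable {α : Type*} [Fintype α] [DecidableEq α]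

theorem swap_eq_swap_iff {a b x y : α} (hxy : x ≠ y) :
    swap a b = swap x y ↔ a = x ∧ b = y ∨ a = y ∧ b = x := by
  refine ⟨fun h => ?_, ?_⟩
  · have hab : a ≠ b := by
      rintro rfl
      rw [swap_self] at h
      exact hxy (by simpa using congrArg (fun σ : Perm α => σ x) h)
    have := congrArg (fun σ : Perm α => (σ.support : Set α)) h
    simpa [Perm.support_swap hab, Perm.support_swap hxy, Set.pair_eq_pair_iff] using this
  · rintro (⟨rfl, rfl⟩ | ⟨rfl, rfl⟩)
    · rfl
    · exact swap_comm _ _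

theorem card_offDiag_filter_swap_eq_two {τ : Perm α} (hτ : τ.IsSwap) :
    #{p ∈ univ.offDiag | swap p.1 p.2 = τ} = 2 := by
  obtain ⟨x, y, hxy, rfl⟩ := hτ
  rw [card_eq_two]
  refine ⟨(x, y), (y, x), by simp [hxy], ?_⟩
  ext ⟨a, b⟩
  simp only [mem_filter, mem_offDiag, mem_univ, true_and, swap_eq_swap_iff hxy, mem_insert,
    mem_singleton, Prod.mk.injEq]
  grind

theorem sum_sum_swap {M : Type*} [AddCommMonoid M] (F : Perm α → M) :
    ∑ a, ∑ b, F (swap a b) =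
      2 • ∑ τ ∈ univ.filter Perm.IsSwap, F τ + Fintype.card α • F 1 := by
  rw [← Fintype.sum_prod_type', ← univ_product_univ, ← diag_union_offDiag,
    sum_union (disjoint_diag_offDiag _), sum_diag, add_comm]
  congr 1
  · rw [← sum_fiberwise_of_maps_to (g := fun p => swap p.1 p.2) (t := univ.filter Perm.IsSwap)
      fun p hp => mem_filter.2 ⟨mem_univ _, p.1, p.2, (mem_offDiag.1 hp).2.2, rfl⟩, smul_sum]
    refine sum_congr rfl fun τ hτ => ?_
    rw [sum_congr rfl fun p hp => congrArg F (mem_filter.1 hp).2, sum_const,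
      card_offDiag_filter_swap_eq_two (mem_filter.1 hτ).2]
  · simp [Perm.one_def]

theorem card_filter_isSwap :
    #(univ.filter (Perm.IsSwap : Perm α → Prop)) = (Fintype.card α).choose 2 := by
  have h := sum_sum_swap (α := α) (fun _ => 1)
  simp only [sum_const, card_univ, smul_eq_mul, mul_one] at h
  rw [Nat.choose_two_right, Nat.mul_sub_one, h]
  omega

/-- The last coefficient counts the `(n-2)(n-3)/2` transpositions disjoint from `{x, y}`. -/
theorem sum_isSwap_apply_apply (h : α → α → ℝ) {x y : α} (hxy : x ≠ y) :
    ∑ τ ∈ univ.filter Perm.IsSwap, h (τ x) (τ y) =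
      h y x + ∑ z ∈ {x, y}ᶜ, (h z y + h x z)
        + ((Fintype.card α : ℝ) - 2) * (Fintype.card α - 3) / 2 * h x y := by
  have hc := cast_card_compl_pair (R := ℝ) hxy
  have row_x : ∑ b, h (swap x b x) (swap x b y) = h x y + h y x + ∑ z ∈ {x, y}ᶜ, h z y := by
    rw [Fintype.sum_eq_add_add_sum_compl_pair hxy]
    refine congrArg₂ (· + ·) (by simp) (sum_congr rfl fun z hz => ?_)
    simp only [mem_compl, mem_insert, mem_singleton, not_or] at hz
    rw [swap_apply_left, swap_apply_of_ne_of_ne hxy.symm (Ne.symm hz.2)]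
  have row_y : ∑ b, h (swap y b x) (swap y b y) = h y x + h x y + ∑ z ∈ {x, y}ᶜ, h x z := by
    rw [Fintype.sum_eq_add_add_sum_compl_pair hxy]
    refine congrArg₂ (· + ·) (by simp) (sum_congr rfl fun z hz => ?_)
    simp only [mem_compl, mem_insert, mem_singleton, not_or] at hz
    rw [swap_apply_left, swap_apply_of_ne_of_ne hxy (Ne.symm hz.1)]
  have row_z : ∀ z ∈ ({x, y}ᶜ : Finset α), ∑ b, h (swap z b x) (swap z b y) =
      h z y + h x z + (Fintype.card α - 2) * h x y := by
    intro z hz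
    simp only [mem_compl, mem_insert, mem_singleton, not_or] at hz
    have hfix : ∀ w ∈ ({x, y}ᶜ : Finset α), h (swap z w x) (swap z w y) = h x y := by
      intro w hw
      simp only [mem_compl, mem_insert, mem_singleton, not_or] at hw
      rw [swap_apply_of_ne_of_ne (Ne.symm hz.1) (Ne.symm hw.1),
        swap_apply_of_ne_of_ne (Ne.symm hz.2) (Ne.symm hw.2)]
    rw [Fintype.sum_eq_add_add_sum_compl_pair hxy, sum_congr rfl hfix, sum_const, nsmul_eq_mul,
      hc, swap_apply_right, swap_apply_right, swap_apply_of_ne_of_ne (Ne.symm hz.2) hxy.symm,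
      swap_apply_of_ne_of_ne (Ne.symm hz.1) hxy]
  have hsum := sum_sum_swap (fun τ : Perm α => h (τ x) (τ y))
  rw [Fintype.sum_eq_add_add_sum_compl_pair hxy, row_x, row_y, sum_congr rfl row_z,
    sum_add_distrib, sum_add_distrib] at hsum
  simp only [sum_const, hc, nsmul_eq_mul, Perm.one_apply, Nat.cast_ofNat] at hsum
  rw [sum_add_distrib]
  linear_combination (-1 / 2 : ℝ) * hsum

theorem sum_isSwap_sub_apply (f : α → ℝ) (x y : α) :
    ∑ τ ∈ univ.filter Perm.IsSwap, (f (τ x) - f (τ y)) =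
      (Fintype.card α : ℝ) * (Fintype.card α - 3) / 2 * (f x - f y) := by
  rcases eq_or_ne x y with rfl | hxy
  · simp
  rw [sum_isSwap_apply_apply (fun u v => f u - f v) hxy,
    sum_congr rfl fun z _ => show f z - f y + (f x - f z) = f x - f y by ring, sum_const,
    nsmul_eq_mul, cast_card_compl_pair hxy]
  ring

end Equiv

namespace Fin

variable {n : ℕ}

theorem sum_ite_const_lt (y : Fin n) : ∑ z, (if y < z then (1 : ℝ) else 0) = n - 1 - y := by
  have := y.isLt
  rw [sum_boole, filter_lt_eq_Ioi, card_Ioi, Nat.cast_sub (by omega), Nat.cast_sub (by omega),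
    Nat.cast_one]

theorem sum_ite_lt_const (x : Fin n) : ∑ z, (if z < x then (1 : ℝ) else 0) = x := by
  rw [sum_boole, filter_gt_eq_Iio, card_Iio]

theorem sum_isSwap_ite_lt {x y : Fin n} (hxy : x ≠ y) :
    ∑ τ ∈ univ.filter Perm.IsSwap, (if τ y < τ x then (1 : ℝ) else 0) =
      n + x - y + (n : ℝ) * (n - 5) / 2 * (if y < x then 1 else 0) := by
  have above := Fintype.sum_eq_add_add_sum_compl_pair hxy fun z => if y < z then (1 : ℝ) else 0
  have below := Fintype.sum_eq_add_add_sum_compl_pair hxy fun z => if z < x then (1 : ℝ) else 0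
  rw [sum_ite_const_lt] at above
  rw [sum_ite_lt_const] at below
  rw [sum_isSwap_apply_apply (fun u v => if v < u then (1 : ℝ) else 0) hxy, sum_add_distrib,
    Fintype.card_fin]
  rcases hxy.lt_or_gt with h | h <;>
  · simp only [h, h.not_gt, lt_irrefl, if_true, if_false] at above below ⊢
    linear_combination -above - below

end Fin

def ascendingPairs (n : ℕ) : Finset (Fin n × Fin n) := univ.filter fun p => p.1 < p.2

noncomputable def displacement {n : ℕ} (σ : Perm (Fin n)) : ℝ :=
  ∑ p ∈ ascendingPairs n, (((σ p.1 : ℕ) : ℝ) - (σ p.2 : ℕ))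

section Pairs

variable {n : ℕ}

theorem cast_invCount_eq_sum (σ : Perm (Fin n)) :
    (invCount n σ : ℝ) =
      ∑ p ∈ ascendingPairs n, if σ p.2 < σ p.1 then (1 : ℝ) else 0 := by
  rw [sum_boole, ascendingPairs, filter_filter]
  rfl

theorem invCount_one : invCount n 1 = 0 :=
  card_eq_zero.2 (filter_eq_empty_iff.2 fun _ _ h => lt_asymm h.1 h.2)

theorem sum_ascendingPairs_eq_sum_range (g : ℕ → ℕ → ℝ) :
    ∑ p ∈ ascendingPairs n, g p.1 p.2 = ∑ b ∈ range n, ∑ a ∈ range b, g a b := by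
  rw [sum_sigma']
  refine sum_bij' (fun p _ => ⟨p.2, p.1⟩)
    (fun x hx => (⟨x.2, by simp only [mem_sigma, mem_range] at hx; omega⟩,
      ⟨x.1, by simp only [mem_sigma, mem_range] at hx; omega⟩)) ?_ ?_ ?_ ?_
    (fun _ _ => rfl) <;> simp_all [ascendingPairs]

theorem cast_card_ascendingPairs : (#(ascendingPairs n) : ℝ) = n * (n - 1) / 2 := by
  rw [card_eq_sum_ones, Nat.cast_sum, Nat.cast_one,
    sum_ascendingPairs_eq_sum_range fun _ _ => 1]
  simp only [sum_const, card_range, nsmul_one, sum_range_cast_id]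

theorem displacement_one : displacement (1 : Perm (Fin n)) = -((n + 1) * n * (n - 1) / 6) := by
  simp only [displacement, Perm.one_apply]
  rw [sum_ascendingPairs_eq_sum_range fun a b => (a : ℝ) - b]
  induction n with
  | zero => simp
  | succ n ih =>
    rw [sum_range_succ, ih, sum_sub_distrib, sum_range_cast_id, sum_const, card_range,
      nsmul_eq_mul]
    push_cast
    ring

theorem sum_isSwap_displacement_mul (σ : Perm (Fin n)) :
    ∑ τ ∈ univ.filter Perm.IsSwap, displacement (τ * σ) =
      (n : ℝ) * (n - 3) / 2 * displacement σ := by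
  simp only [displacement, Perm.mul_apply, mul_sum]
  rw [sum_comm]
  refine sum_congr rfl fun p _ => ?_
  rw [sum_isSwap_sub_apply (fun z : Fin n => ((z : ℕ) : ℝ)), Fintype.card_fin]

theorem sum_isSwap_invCount_mul (σ : Perm (Fin n)) :
    ∑ τ ∈ univ.filter Perm.IsSwap, (invCount n (τ * σ) : ℝ) =
      (n : ℝ) * (n - 5) / 2 * invCount n σ + n * #(ascendingPairs n) + displacement σ := by
  simp only [cast_invCount_eq_sum, displacement]
  rw [sum_comm, card_eq_sum_ones, Nat.cast_sum, Nat.cast_one, mul_sum, mul_sum,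
    ← sum_add_distrib, ← sum_add_distrib]
  refine sum_congr rfl fun p hp =>
    (Fin.sum_isSwap_ite_lt (σ.injective.ne (mem_filter.1 hp).2.ne)).trans ?_
  ring

end Pairs

theorem sum_piFinset_succ_list_prod_ofFn {G M : Type*} [Monoid G] [AddCommMonoid M]
    (s : Finset G) (F : G → M) (t : ℕ) :
    ∑ f ∈ Fintype.piFinset fun _ : Fin (t + 1) => s, F (List.ofFn f).prod =
      ∑ f ∈ Fintype.piFinset fun _ : Fin t => s, ∑ g ∈ s, F (g * (List.ofFn f).prod) := by
  have h := filter_piFinset_eq_map_consEquiv (fun _ : Fin (t + 1) => s) fun _ => True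
  rw [filter_true, filter_true] at h
  rw [h, sum_map, sum_product, sum_comm]
  simp only [Function.Embedding.coeFn_mk, List.ofFn_succ, Fin.consEquiv_apply, Fin.cons_zero,
    Fin.cons_succ, List.prod_cons]
  rfl

noncomputable def swapWords (n t : ℕ) : Finset (Fin t → Perm (Fin n)) :=
  Fintype.piFinset fun _ => univ.filter Perm.IsSwap

section Words

variable {n : ℕ}

theorem cast_card_swapWords (t : ℕ) :
    (#(swapWords n t) : ℝ) = ((n : ℝ) * (n - 1) / 2) ^ t := by
  rw [swapWords, Fintype.card_piFinset_const, card_filter_isSwap, Fintype.card_fin, Nat.cast_pow,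
    Nat.cast_choose_two]

theorem sum_swapWords_displacement (t : ℕ) :
    ∑ f ∈ swapWords n t, displacement (List.ofFn f).prod =
      -((n + 1) * n * (n - 1) / 6) * ((n : ℝ) * (n - 3) / 2) ^ t := by
  induction t with
  | zero => simp [swapWords, displacement_one]
  | succ t ih =>
    rw [swapWords, sum_piFinset_succ_list_prod_ofFn]
    simp only [sum_isSwap_displacement_mul, ← mul_sum]
    rw [← swapWords, ih]
    ring

theorem sum_swapWords_invCount (t : ℕ) :
    ∑ f ∈ swapWords n t, (invCount n (List.ofFn f).prod : ℝ) =
      (n : ℝ) * (n - 1) / 4 * ((n : ℝ) * (n - 1) / 2) ^ t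
      - (n + 1) * (n - 1) / 6 * ((n : ℝ) * (n - 3) / 2) ^ t
      - (n - 1) * (n - 2) / 12 * ((n : ℝ) * (n - 5) / 2) ^ t := by
  induction t with
  | zero =>
    simp only [swapWords, Fintype.piFinset_of_isEmpty, univ_unique, List.ofFn_zero,
      List.prod_nil, invCount_one, CharP.cast_eq_zero, sum_const_zero, pow_zero, mul_one]
    ring
  | succ t ih =>
    rw [swapWords, sum_piFinset_succ_list_prod_ofFn _ fun σ => (invCount n σ : ℝ)]
    simp only [sum_isSwap_invCount_mul, sum_add_distrib, ← mul_sum, sum_const]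
    rw [← swapWords, ih, sum_swapWords_displacement, cast_card_ascendingPairs, nsmul_eq_mul,
      cast_card_swapWords]
    ring

end Words

theorem expected_inversions_random_transpositions (n t : ℕ) (hn : 2 ≤ n) :
    expInv n t =
      (n : ℝ) * (n - 1) / 4
      - (n + 1) * (n - 1) / 6 * (1 - 2 / ((n : ℝ) - 1)) ^ t
      - (n - 1) * (n - 2) / 12 * (1 - 4 / ((n : ℝ) - 1)) ^ t := by
  have hn0 : (n : ℝ) ≠ 0 := by positivity
  have hn1 : (n : ℝ) - 1 ≠ 0 := sub_ne_zero.2 (by exact_mod_cast (by omega : n ≠ 1))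
  have normalize {A B C a b N : ℝ} (hN : N ≠ 0) :
      (A * N ^ t - B * a ^ t - C * b ^ t) / N ^ t = A - B * (a / N) ^ t - C * (b / N) ^ t := by
    rw [div_pow, div_pow]
    field_simp
  have ratio (a k : ℝ) (ha : a = n * (n - 1 - k) / 2) :
      a / (n * (n - 1) / 2) = 1 - k / (n - 1) := by
    rw [ha]
    field_simp
  have words :
      univ.filter (fun f : Fin t → Perm (Fin n) => ∀ i, (f i).IsSwap) = swapWords n t := by
    ext f
    simp [swapWords]
  rw [expInv, words, sum_swapWords_invCount, card_filter_isSwap, Fintype.card_fin,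
    Nat.cast_choose_two, normalize (by positivity), ratio _ 2 (by ring), ratio _ 4 (by ring)]
end

section
/- For n ≥ 2, t ≥ 0, and 1 ≤ i < j ≤ n, if π is a product of t independent uniformly random transpositions in S_n, then P(π(i) > π(j)) = 1/2 - ((j-i)/n)(1 - 2/(n-1))^t + ((j-i)/n - 1/2)(1 - 4/(n-1))^t. -/
/-!
Write `p_t(a, b)` for the probability that `π b < π a`. Splitting off the last factor of `π` gives
`p_{t+1}(a, b) = N⁻¹ ∑_τ p_t(τ a, τ b)`, the sum running over the `N = n(n-1)/2` transpositions,
so `p_t` is the `t`-th iterate of this averaging operator applied to the inversion indicator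
`I(a, b) = [b < a]`. Sorting the transpositions by which of `a`, `b` they move shows that on pairs
`a ≠ b` the operator fixes `1`, multiplies `D(a, b) = b - a` by `1 - 2/(n-1)`, and sends `I` to
`(1 - 4/(n-1)) I + (2/(n-1)) (1 - D/n)`. Solving this three-dimensional linear recursion gives the
closed form.
-/

open Classical

/-- The probability that `π i > π j` where `π` is a product of `t` independent
uniformly random transpositions in the symmetric group `Sₙ`. -/
noncomputable def swapProbGt (n t : ℕ) (i j : Fin n) : ℝ :=
  ((Finset.univ.filter (fun f : Fin t → Equiv.Perm (Fin n) =>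
      (∀ k, (f k).IsSwap) ∧ (List.ofFn f).prod j < (List.ofFn f).prod i)).card : ℝ) /
    ((Finset.univ.filter (fun σ : Equiv.Perm (Fin n) => σ.IsSwap)).card : ℝ) ^ t

open Equiv Finset

theorem sum_piFinset_ofFn_prod_succ {M β : Type*} [Monoid M] [AddCommMonoid β] (S : Finset M)
    (φ : M → β) (t : ℕ) :
    ∑ f ∈ Fintype.piFinset (fun _ : Fin (t + 1) => S), φ (List.ofFn f).prod =
      ∑ τ ∈ S, ∑ f ∈ Fintype.piFinset (fun _ : Fin t => S), φ ((List.ofFn f).prod * τ) := by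
  have h := filter_piFinset_eq_map_snocEquiv (fun _ : Fin (t + 1) => S) (fun _ => True)
  simp only [filter_true_of_mem (fun _ _ => trivial)] at h
  rw [h, sum_map, sum_product]
  refine sum_congr rfl fun τ _ => sum_congr rfl fun f _ => ?_
  simp only [Fin.snocEquiv, Equiv.coe_toEmbedding, Equiv.coe_fn_mk, List.ofFn_succ',
    List.prod_concat, Fin.snoc_castSucc, Fin.snoc_last]

theorem Finset.card_compl_pair_add_two {α : Type*} [DecidableEq α] [Fintype α] {a b : α}
    (hab : a ≠ b) : #({a, b} : Finset α)ᶜ + 2 = Fintype.card α := by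
  rw [← card_pair hab, card_compl_add_card]

namespace Equiv.Perm
variable {α : Type*} [DecidableEq α]

theorem IsSwap.eq_swap_apply_of_apply_ne {τ : Perm α} {a : α} (h : τ.IsSwap) (ha : τ a ≠ a) :
    τ = swap a (τ a) := by
  obtain ⟨x, y, -, rfl⟩ := h
  rw [swap_apply_ne_self_iff] at ha
  rcases ha.2 with rfl | rfl
  · simp
  · simp [swap_comm]

theorem IsSwap.eq_swap_of_apply_ne_of_apply_ne {τ : Perm α} {a b : α} (h : τ.IsSwap) (hab : a ≠ b)
    (ha : τ a ≠ a) (hb : τ b ≠ b) : τ = swap a b := by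
  obtain ⟨x, y, -, rfl⟩ := h
  rw [swap_apply_ne_self_iff] at ha hb
  rcases ha.2 with rfl | rfl <;> rcases hb.2 with rfl | rfl <;> simp_all [swap_comm]

variable (α) [Fintype α]

noncomputable def swaps : Finset (Perm α) := {σ | σ.IsSwap}

variable {α} {β : Type*} [AddCommMonoid β]

theorem mem_swaps {σ : Perm α} : σ ∈ swaps α ↔ σ.IsSwap := by
  simp [swaps]

theorem sum_swaps_filter_apply_ne (a : α) (g : Perm α → β) :
    ∑ τ ∈ swaps α with τ a ≠ a, g τ = ∑ c ∈ {a}ᶜ, g (swap a c) := by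
  refine sum_nbij' (fun τ => τ a) (swap a) ?_ ?_ ?_ ?_ ?_
  · intro τ hτ
    simp_all
  · intro c hc
    have hca : c ≠ a := by simpa using hc
    simp [mem_swaps.2 ⟨a, c, hca.symm, rfl⟩, hca]
  · intro τ hτ
    simp only [mem_filter, mem_swaps] at hτ
    exact (hτ.1.eq_swap_apply_of_apply_ne hτ.2).symm
  · intro c _
    simp
  · intro τ hτ
    simp only [mem_filter, mem_swaps] at hτ
    rw [← hτ.1.eq_swap_apply_of_apply_ne hτ.2]

theorem sum_swaps_filter_apply_ne_apply_eq {a b : α} (hab : a ≠ b) (g : Perm α → β) :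
    ∑ τ ∈ swaps α with τ a ≠ a ∧ τ b = b, g τ = ∑ c ∈ {a, b}ᶜ, g (swap a c) := by
  rw [← filter_filter, sum_filter, sum_swaps_filter_apply_ne, ← sum_filter]
  congr 1
  ext c
  rcases eq_or_ne c b with rfl | hcb
  · simp [hab]
  · simp [swap_apply_of_ne_of_ne hab.symm hcb.symm, hcb]

theorem card_swaps_filter_apply_ne (a : α) :
    #{τ ∈ swaps α | τ a ≠ a} = Fintype.card α - 1 := by
  rw [card_eq_sum_ones, sum_swaps_filter_apply_ne, ← card_eq_sum_ones, card_compl, card_singleton]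

-- Double count the pairs `(a, τ)` with `τ a ≠ a`: each transposition moves exactly two points.
theorem card_swaps_mul_two : #(swaps α) * 2 = Fintype.card α * (Fintype.card α - 1) := by
  have h := sum_card_bipartiteAbove_eq_sum_card_bipartiteBelow
    (s := (univ : Finset α)) (t := swaps α) (r := fun a τ => τ a ≠ a)
  simp only [bipartiteAbove, bipartiteBelow, card_swaps_filter_apply_ne, sum_const, card_univ,
    smul_eq_mul] at h
  rw [h, card_eq_sum_ones, sum_mul]
  refine sum_congr rfl fun τ hτ => ?_
  rw [one_mul, ← card_support_eq_two.2 (mem_swaps.1 hτ)]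
  rfl

theorem sum_swaps_eq_of_ne {a b : α} (hab : a ≠ b) (g : Perm α → β) :
    ∑ τ ∈ swaps α, g τ = ∑ τ ∈ swaps α with τ a = a ∧ τ b = b, g τ + g (swap a b) +
      ∑ c ∈ {a, b}ᶜ, (g (swap a c) + g (swap b c)) := by
  have hboth : {τ ∈ swaps α | τ a ≠ a ∧ τ b ≠ b} = {swap a b} := by
    ext τ
    simp only [mem_filter, mem_swaps, mem_singleton]
    refine ⟨fun h => h.1.eq_swap_of_apply_ne_of_apply_ne hab h.2.1 h.2.2, ?_⟩
    rintro rfl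
    exact ⟨⟨a, b, hab, rfl⟩, by simp [hab.symm], by simp [hab]⟩
  calc ∑ τ ∈ swaps α, g τ
      = ∑ τ ∈ swaps α with τ a = a ∧ τ b = b, g τ + ∑ τ ∈ swaps α with τ a ≠ a ∧ τ b ≠ b, g τ
        + ∑ τ ∈ swaps α with τ a ≠ a ∧ τ b = b, g τ
        + ∑ τ ∈ swaps α with τ b ≠ b ∧ τ a = a, g τ := by
        simp only [sum_filter, ← sum_add_distrib]
        refine sum_congr rfl fun τ _ => ?_
        by_cases ha : τ a = a <;> by_cases hb : τ b = b <;> simp [ha, hb]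
    _ = _ := by
        rw [hboth, sum_singleton, sum_swaps_filter_apply_ne_apply_eq hab,
          sum_swaps_filter_apply_ne_apply_eq hab.symm, pair_comm, sum_add_distrib, add_assoc]

theorem card_swaps_filter_apply_eq_apply_eq {a b : α} (hab : a ≠ b) :
    #{τ ∈ swaps α | τ a = a ∧ τ b = b} + 2 * Fintype.card α = #(swaps α) + 3 := by
  have h := sum_swaps_eq_of_ne hab (fun _ => 1)
  have hcard := card_compl_pair_add_two hab
  simp only [sum_const, smul_eq_mul] at h
  omega

theorem sum_swaps_apply_apply {a b : α} (hab : a ≠ b) (h : α → α → ℝ) :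
    ∑ τ ∈ swaps α, h (τ a) (τ b) = (#(swaps α) + 3 - 2 * Fintype.card α : ℝ) * h a b + h b a +
      ∑ c ∈ {a, b}ᶜ, (h c b + h a c) := by
  have hfix : ∑ τ ∈ swaps α with τ a = a ∧ τ b = b, h (τ a) (τ b) =
      (#(swaps α) + 3 - 2 * Fintype.card α : ℝ) * h a b := by
    rw [sum_congr rfl fun τ hτ => by rw [(mem_filter.1 hτ).2.1, (mem_filter.1 hτ).2.2],
      sum_const, nsmul_eq_mul]
    congr 1
    rw [eq_sub_iff_add_eq]
    exact_mod_cast card_swaps_filter_apply_eq_apply_eq hab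
  rw [sum_swaps_eq_of_ne hab, hfix, swap_apply_left, swap_apply_right]
  congr 1
  refine sum_congr rfl fun c hc => ?_
  simp only [mem_compl, mem_insert, mem_singleton, not_or] at hc
  rw [swap_apply_left, swap_apply_left, swap_apply_of_ne_of_ne hab.symm (Ne.symm hc.2),
    swap_apply_of_ne_of_ne hab (Ne.symm hc.1)]

theorem sum_swaps_sub_apply (v : α → ℝ) (a b : α) :
    ∑ τ ∈ swaps α, (v (τ b) - v (τ a)) = (#(swaps α) - Fintype.card α : ℝ) * (v b - v a) := by
  rcases eq_or_ne a b with rfl | hab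
  · simp
  have hcard : (#({a, b} : Finset α)ᶜ : ℝ) = Fintype.card α - 2 := by
    rw [eq_sub_iff_add_eq]
    exact_mod_cast card_compl_pair_add_two hab
  rw [sum_swaps_apply_apply hab (fun x y => v y - v x)]
  simp only [sub_add_sub_cancel, sum_const, nsmul_eq_mul, hcard]
  ring

theorem sum_swaps_ite_apply_lt {n : ℕ} {a b : Fin n} (hab : a ≠ b) :
    ∑ τ ∈ swaps (Fin n), (if τ b < τ a then 1 else 0 : ℝ) =
      (#(swaps (Fin n)) - 2 * n : ℝ) * (if b < a then 1 else 0) + n -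
        (((b : ℕ) : ℝ) - (a : ℕ)) := by
  have hb : #(Ioi b) + b + 1 = n := by rw [Fin.card_Ioi]; omega
  have hall : ∑ c, ((if b < c then 1 else 0 : ℝ) + if c < a then 1 else 0) = n - 1 - b + a := by
    rw [sum_add_distrib, sum_boole, sum_boole, filter_lt_eq_Ioi, filter_gt_eq_Iio, Fin.card_Iio]
    have hb' : (#(Ioi b) : ℝ) + b + 1 = n := by exact_mod_cast hb
    linarith
  have hcompl := sum_compl_add_sum ({a, b} : Finset (Fin n))
    (fun c => (if b < c then 1 else 0 : ℝ) + if c < a then 1 else 0)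
  rw [sum_pair hab, hall] at hcompl
  rw [sum_swaps_apply_apply hab (fun x y => if y < x then 1 else 0), eq_sub_of_add_eq hcompl,
    Fintype.card_fin]
  rcases hab.lt_or_gt with h | h <;>
    simp only [h, h.not_gt, lt_self_iff_false, ↓reduceIte] <;> ring

end Equiv.Perm

open Equiv.Perm

theorem swapProbGt_eq_sum (n t : ℕ) (a b : Fin n) :
    swapProbGt n t a b = (∑ f ∈ Fintype.piFinset fun _ : Fin t => swaps (Fin n),
      if (List.ofFn f).prod b < (List.ofFn f).prod a then 1 else 0 : ℝ) / #(swaps (Fin n)) ^ t := by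
  rw [swapProbGt, sum_boole]
  congr 3
  ext f
  simp [Fintype.mem_piFinset, mem_swaps]

theorem swapProbGt_zero (n : ℕ) (a b : Fin n) :
    swapProbGt n 0 a b = if b < a then 1 else 0 := by
  simp [swapProbGt_eq_sum]

theorem swapProbGt_succ (n t : ℕ) (a b : Fin n) :
    swapProbGt n (t + 1) a b =
      (∑ τ ∈ swaps (Fin n), swapProbGt n t (τ a) (τ b)) / #(swaps (Fin n)) := by
  rw [swapProbGt_eq_sum,
    sum_piFinset_ofFn_prod_succ (swaps (Fin n)) fun π => if π b < π a then 1 else 0]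
  simp only [swapProbGt_eq_sum, ← sum_div, pow_succ, div_mul_eq_div_div]
  -- the two sides differ only in the `Decidable` instances of their `if`s
  rfl

theorem swapProbGt_eq_of_ne {n : ℕ} {a b : Fin n} (hab : a ≠ b) (t : ℕ) :
    swapProbGt n t a b =
      1 / 2 - (((b : ℕ) : ℝ) - (a : ℕ)) / n * (1 - 2 / ((n : ℝ) - 1)) ^ t
      + ((((b : ℕ) : ℝ) - (a : ℕ)) / n - 1 / 2 + if b < a then 1 else 0) *
        (1 - 4 / ((n : ℝ) - 1)) ^ t := by
  induction t generalizing a b with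
  | zero => rw [swapProbGt_zero]; ring
  | succ t ih =>
    have hn : 2 ≤ n := by
      have := Fin.val_ne_of_ne hab
      omega
    have hN : (#(swaps (Fin n)) : ℝ) = n * (n - 1) / 2 := by
      have h : ((#(swaps (Fin n)) * 2 : ℕ) : ℝ) = ((n * (n - 1) : ℕ) : ℝ) := by
        rw [card_swaps_mul_two, Fintype.card_fin]
      push_cast [Nat.cast_sub (by omega : 1 ≤ n)] at h
      linarith
    have hn' : (2 : ℝ) ≤ n := by exact_mod_cast hn
    set L₁ := 1 - 2 / ((n : ℝ) - 1)
    set L₂ := 1 - 4 / ((n : ℝ) - 1)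
    rw [swapProbGt_succ, sum_congr rfl fun τ _ => ih (τ.injective.ne hab)]
    rw [sum_congr rfl fun τ _ => show _ = (1 / 2 - L₂ ^ t / 2 : ℝ) + (L₂ ^ t - L₁ ^ t) / n *
        (((τ b : ℕ) : ℝ) - (τ a : ℕ)) + L₂ ^ t * (if τ b < τ a then 1 else 0) by ring]
    rw [sum_add_distrib, sum_add_distrib, sum_const, ← mul_sum, ← mul_sum,
      sum_swaps_sub_apply (fun c : Fin n => ((c : ℕ) : ℝ)), sum_swaps_ite_apply_lt hab,
      Fintype.card_fin, nsmul_eq_mul, hN]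
    have : (n : ℝ) - 1 ≠ 0 := by linarith
    have : (n : ℝ) ≠ 0 := by linarith
    rw [pow_succ, pow_succ]
    generalize L₁ ^ t = x
    generalize L₂ ^ t = y
    simp only [L₁, L₂]
    field_simp
    ring

theorem prob_inversion_random_transpositions_general (n t : ℕ)
    (i j : Fin n) (hij : i < j) :
    swapProbGt n t i j =
      1 / 2
      - (((j : ℕ) : ℝ) - (i : ℕ)) / n * (1 - 2 / ((n : ℝ) - 1)) ^ t
      + ((((j : ℕ) : ℝ) - (i : ℕ)) / n - 1 / 2) * (1 - 4 / ((n : ℝ) - 1)) ^ t := by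
  rw [swapProbGt_eq_of_ne hij.ne, if_neg hij.not_gt, add_zero]

theorem prob_inversion_random_transpositions (n t : ℕ) (hn : 2 ≤ n)
    (i j : Fin n) (hij : i < j) :
    swapProbGt n t i j =
      1 / 2
      - (((j : ℕ) : ℝ) - (i : ℕ)) / n * (1 - 2 / ((n : ℝ) - 1)) ^ t
      + ((((j : ℕ) : ℝ) - (i : ℕ)) / n - 1 / 2) * (1 - 4 / ((n : ℝ) - 1)) ^ t :=
  prob_inversion_random_transpositions_general n t i j hij
end

section
/- Fix n ≥ 2 and t ≥ 0, and let π be a product of t independent uniformly random transpositions in S_n. Then for 1 ≤ i < j ≤ n, the probability P(π(i) > π(j)) depends only on the difference j - i. -/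
/-!
Since the transpositions form a conjugacy class, the law of `π` is invariant under conjugation.
Conjugating by the rotation `c : x ↦ x + 1 (mod n)` turns `P(π(i+1) > π(j+1))` into
`P(c(π i) > c(π j))`. The rotation preserves the order except that it sends the top element
`n - 1` to the bottom, so the events `{c(π i) > c(π j)}` and `{π i > π j}` differ only by
`{π j = n - 1}` against `{π i = n - 1}`; conjugating by the transposition `(i j)`, which fixes
`n - 1` when `i, j < n - 1`, shows that these two have the same probability. Iterating the unit
shift gives the claim.
-/

open Classical

open Finset Equiv

section Group

variable {G : Type*} [Group G] [Fintype G] {S : Set G} {t : ℕ}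

variable (S t) in
noncomputable def prodCount (Q : G → Prop) : ℕ :=
  (univ.filter fun f : Fin t → G => (∀ k, f k ∈ S) ∧ Q (List.ofFn f).prod).card

theorem prodCount_congr {Q R : G → Prop} (h : ∀ g, Q g ↔ R g) :
    prodCount S t Q = prodCount S t R :=
  congrArg _ (funext fun g => propext (h g))

theorem prodCount_or {Q R : G → Prop} (h : ∀ g, Q g → ¬ R g) :
    prodCount S t (fun g => Q g ∨ R g) = prodCount S t Q + prodCount S t R := by
  rw [prodCount, prodCount, prodCount, ← card_union_of_disjoint, ← filter_or]
  · congr 1; ext f; simp only [mem_filter, and_or_left]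
  · exact disjoint_filter.2 fun f _ hQ hR => h _ hQ.2 hR.2

theorem prodCount_comp_mulEquiv (φ : G ≃* G) (hφ : ∀ g, φ g ∈ S ↔ g ∈ S) (Q : G → Prop) :
    prodCount S t (Q ∘ φ) = prodCount S t Q :=
  card_equiv (.piCongrRight fun _ => φ.toEquiv) fun f => by
    simp only [mem_filter, mem_univ, true_and, Function.comp_apply, map_list_prod, List.map_ofFn]
    exact and_congr (forall_congr' fun k => (hφ (f k)).symm) Iff.rfl

theorem prodCount_conj (hS : ∀ σ, ∀ g ∈ S, σ * g * σ⁻¹ ∈ S) (σ : G) (Q : G → Prop) :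
    prodCount S t (fun g => Q (σ * g * σ⁻¹)) = prodCount S t Q :=
  prodCount_comp_mulEquiv (MulAut.conj σ)
    (fun g => ⟨fun h => by simpa [mul_assoc] using hS σ⁻¹ _ h, hS σ g⟩) Q

end Group

theorem Equiv.Perm.IsSwap.conj {α : Type*} [DecidableEq α] {σ τ : Perm α} (h : τ.IsSwap) :
    (σ * τ * σ⁻¹).IsSwap := by
  obtain ⟨x, y, hxy, rfl⟩ := h
  exact ⟨σ x, σ y, σ.injective.ne hxy, (swap_apply_apply σ x y).symm⟩

theorem prodCount_apply_eq {α : Type*} [Fintype α] [DecidableEq α] {S : Set (Perm α)} {t : ℕ}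
    (hS : ∀ σ, ∀ g ∈ S, σ * g * σ⁻¹ ∈ S) {i j x : α} (hi : i ≠ x) (hj : j ≠ x) :
    prodCount S t (fun P => P i = x) = prodCount S t (fun P => P j = x) := by
  rw [← prodCount_conj hS (swap i j)]
  refine prodCount_congr fun P => ?_
  simp [Perm.mul_apply, swap_apply_eq_iff, swap_apply_of_ne_of_ne hi.symm hj.symm]

section Rotate

variable {m : ℕ}

theorem finRotate_lt_finRotate_iff {a b : Fin (m + 1)} (hab : a ≠ b) :
    finRotate _ b < finRotate _ a ↔ b < a ∧ a ≠ Fin.last m ∨ b = Fin.last m := by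
  rcases eq_or_ne a (Fin.last m) with rfl | ha
  · simp [Ne.symm hab]
  rcases eq_or_ne b (Fin.last m) with rfl | hb
  · simp only [or_true, iff_true]
    rw [finRotate_last, Fin.pos_iff_ne_zero, ← finRotate_last, Ne, (finRotate _).apply_eq_iff_eq]
    exact ha
  · simp only [Fin.lt_def, coe_finRotate_of_ne_last ha, coe_finRotate_of_ne_last hb, hb, ne_eq, ha,
      not_false_eq_true, and_true, or_false]
    omega

variable {S : Set (Perm (Fin (m + 1)))} {t : ℕ} (hS : ∀ σ, ∀ g ∈ S, σ * g * σ⁻¹ ∈ S)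
include hS

theorem prodCount_inversion_finRotate {i j : Fin (m + 1)} (hij : i ≠ j)
    (hi : i ≠ Fin.last m) (hj : j ≠ Fin.last m) :
    prodCount S t (fun P => P (finRotate _ j) < P (finRotate _ i)) =
      prodCount S t (fun P => P j < P i) := by
  have hP (P : Perm (Fin (m + 1))) : P i ≠ P j := P.injective.ne hij
  calc prodCount S t (fun P => P (finRotate _ j) < P (finRotate _ i))
      = prodCount S t (fun P => finRotate _ (P j) < finRotate _ (P i)) := by
        rw [← prodCount_conj hS (finRotate _)]
        simp [Perm.mul_apply]
    _ = prodCount S t (fun P => (P j < P i ∧ P i ≠ Fin.last m) ∨ P j = Fin.last m) :=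
        prodCount_congr fun P => finRotate_lt_finRotate_iff (hP P)
    _ = prodCount S t (fun P => P j < P i ∧ P i ≠ Fin.last m) +
          prodCount S t (fun P => P j = Fin.last m) :=
        prodCount_or fun P h h' => (Fin.le_last _).not_gt (h' ▸ h.1)
    _ = prodCount S t (fun P => P j < P i ∧ P i ≠ Fin.last m) +
          prodCount S t (fun P => P i = Fin.last m) := by
        rw [prodCount_apply_eq hS hj hi]
    _ = prodCount S t (fun P => (P j < P i ∧ P i ≠ Fin.last m) ∨ P i = Fin.last m) :=
        (prodCount_or fun P h h' => h.2 h').symm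
    _ = prodCount S t (fun P => P j < P i) := prodCount_congr fun P => by
        rcases eq_or_ne (P i) (Fin.last m) with h | h
        · simpa [h, Fin.lt_last_iff_ne_last] using (h ▸ hP P).symm
        · simp [h]

theorem prodCount_inversion_add {i j : Fin (m + 1)} (hij : i ≠ j) (k : ℕ) {i' j' : Fin (m + 1)}
    (hi : (i' : ℕ) = i + k) (hj : (j' : ℕ) = j + k) :
    prodCount S t (fun P => P j' < P i') = prodCount S t (fun P => P j < P i) := by
  induction k generalizing i' j' with
  | zero => rw [Fin.ext hi, Fin.ext hj]
  | succ k ih =>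
    obtain ⟨i'', hi''⟩ : ∃ i'' : Fin (m + 1), (i'' : ℕ) = i + k := ⟨⟨i + k, by omega⟩, rfl⟩
    obtain ⟨j'', hj''⟩ : ∃ j'' : Fin (m + 1), (j'' : ℕ) = j + k := ⟨⟨j + k, by omega⟩, rfl⟩
    have hi''_last : i'' ≠ Fin.last m := Fin.ne_of_val_ne (by simp only [Fin.val_last]; omega)
    have hj''_last : j'' ≠ Fin.last m := Fin.ne_of_val_ne (by simp only [Fin.val_last]; omega)
    obtain rfl : i' = finRotate _ i'' := Fin.ext (by rw [coe_finRotate_of_ne_last hi''_last]; omega)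
    obtain rfl : j' = finRotate _ j'' := Fin.ext (by rw [coe_finRotate_of_ne_last hj''_last]; omega)
    have hij'' : i'' ≠ j'' := Fin.ne_of_val_ne (by have := Fin.val_ne_of_ne hij; omega)
    rw [prodCount_inversion_finRotate hS hij'' hi''_last hj''_last, ih hi'' hj'']

end Rotate

theorem swapProbGt_eq_prodCount (n t : ℕ) (i j : Fin n) :
    swapProbGt n t i j = prodCount {σ : Perm (Fin n) | σ.IsSwap} t (fun P => P j < P i) /
      ((univ.filter fun σ : Perm (Fin n) => σ.IsSwap).card : ℝ) ^ t := by
  unfold swapProbGt prodCount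
  congr

theorem prob_inversion_depends_only_on_difference_general (n t : ℕ)
    (i j i' j' : Fin n) (hij : i < j) (hij' : i' < j')
    (h : (j : ℕ) - (i : ℕ) = (j' : ℕ) - (i' : ℕ)) :
    swapProbGt n t i j = swapProbGt n t i' j' := by
  obtain ⟨m, rfl⟩ : ∃ m, n = m + 1 := ⟨n - 1, by omega⟩
  wlog hii' : (i : ℕ) ≤ i' generalizing i j i' j'
  · exact (this i' j' i j hij' hij h.symm (by omega)).symm
  have hij_val := Fin.lt_def.1 hij
  have hij'_val := Fin.lt_def.1 hij'
  rw [swapProbGt_eq_prodCount, swapProbGt_eq_prodCount,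
    prodCount_inversion_add (fun _ _ => Perm.IsSwap.conj) hij.ne (i' - i) (i' := i') (j' := j')
      (by omega) (by omega)]

/-- The probability that `(i, j)` is an inversion of a product of `t` random
transpositions depends only on the difference `j - i`. -/
theorem prob_inversion_depends_only_on_difference (n t : ℕ) (hn : 2 ≤ n)
    (i j i' j' : Fin n) (hij : i < j) (hij' : i' < j')
    (h : (j : ℕ) - (i : ℕ) = (j' : ℕ) - (i' : ℕ)) :
    swapProbGt n t i j = swapProbGt n t i' j' :=
  prob_inversion_depends_only_on_difference_general n t i j i' j' hij hij' h
end

section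
/- Let n ≥ 1, let ℐ_n = {(i,j) : i,j ∈ [-n,n]\{0}, |i| ≠ |j|}, and let 𝒟_n be the space of real-valued functions v on ℐ_n with v_{ji} = -v_{ij} and v_{-j,-i} = v_{ij}. Define Q on 𝒟_n by (Qv)_{ij} = ∑_{|i'| ≠ |j|} v_{i'j} + ∑_{|j'| ≠ |i|} v_{ij'}. Then Q^2 = (2n-2)Q. -/
/-- The index set `[-n, n] \ {0}` as a finset of integers. -/
noncomputable def signedIdx (n : ℕ) : Finset ℤ := (Finset.Icc (-(n : ℤ)) n).erase 0

/-- Membership in `ℐₙ = {(i,j) : i,j ∈ [-n,n]\{0}, |i| ≠ |j|}`. -/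
def memI (n : ℕ) (i j : ℤ) : Prop :=
  i ∈ signedIdx n ∧ j ∈ signedIdx n ∧ |i| ≠ |j|

/-- The operator `Q` of Lemma 5: `(Qv)_{ij} = ∑_{|i'|≠|j|} v_{i'j} + ∑_{|j'|≠|i|} v_{ij'}`,
where `i', j'` run over `[-n,n]\{0}`. -/
noncomputable def QD (n : ℕ) (v : ℤ → ℤ → ℝ) : ℤ → ℤ → ℝ := fun i j =>
  (∑ i' ∈ (signedIdx n).filter (fun i' => |i'| ≠ |j|), v i' j)
  + ∑ j' ∈ (signedIdx n).filter (fun j' => |j'| ≠ |i|), v i j'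

/-! For `v ∈ 𝒟ₙ` the row sums of `v` are minus its column sums `r`, so `(Qv)ᵢⱼ = r j - r i`, and
the symmetry `v₋ⱼ,₋ᵢ = vᵢⱼ` makes `r` odd. On such `(a, b) ↦ r b - r a` the operator `Q` is
multiplication by `2n - 2`: the terms `r j` and `r i` are summed over the `2n - 2` indices whose
absolute value differs from `|j|`, resp. `|i|`, while the sums of the odd `r` over these symmetric
index sets vanish. -/

open Finset

lemma Finset.sum_comp_neg_of_neg_mem {α β : Type*} [InvolutiveNeg α] [AddCommMonoid β]
    {s : Finset α} (hs : ∀ a ∈ s, -a ∈ s) (f : α → β) :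
    ∑ a ∈ s, f (-a) = ∑ a ∈ s, f a :=
  sum_nbij' (-·) (-·) hs hs (fun a _ => neg_neg a) (fun a _ => neg_neg a) (fun _ _ => rfl)

lemma Finset.sum_eq_zero_of_odd_on {α β : Type*} [InvolutiveNeg α] [AddCommGroup β]
    [IsAddTorsionFree β] {s : Finset α} (hs : ∀ a ∈ s, -a ∈ s) {f : α → β}
    (hf : ∀ a ∈ s, f (-a) = -f a) : ∑ a ∈ s, f a = 0 := by
  refine neg_eq_self.mp ?_
  rw [← sum_neg_distrib, ← sum_congr rfl hf, sum_comp_neg_of_neg_mem hs]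

lemma mem_signedIdx {n : ℕ} {a : ℤ} : a ∈ signedIdx n ↔ a ≠ 0 ∧ -(n : ℤ) ≤ a ∧ a ≤ n := by
  simp [signedIdx]

lemma neg_mem_signedIdx {n : ℕ} {a : ℤ} (h : a ∈ signedIdx n) : -a ∈ signedIdx n := by
  rw [mem_signedIdx] at *; omega

lemma card_signedIdx (n : ℕ) : #(signedIdx n) = 2 * n := by
  rw [signedIdx, card_erase_of_mem (by simp), Int.card_Icc]
  omega

lemma memI.symm {n : ℕ} {i j : ℤ} (h : memI n i j) : memI n j i :=
  ⟨h.2.1, h.1, h.2.2.symm⟩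

noncomputable def absNeIdx (n : ℕ) (k : ℤ) : Finset ℤ := (signedIdx n).filter (fun x => |x| ≠ |k|)

lemma mem_absNeIdx {n : ℕ} {k a : ℤ} : a ∈ absNeIdx n k ↔ a ∈ signedIdx n ∧ |a| ≠ |k| :=
  mem_filter

lemma memI_of_mem_absNeIdx {n : ℕ} {k a : ℤ} (hk : k ∈ signedIdx n) (ha : a ∈ absNeIdx n k) :
    memI n a k :=
  ⟨(mem_absNeIdx.mp ha).1, hk, (mem_absNeIdx.mp ha).2⟩

lemma absNeIdx_neg (n : ℕ) (k : ℤ) : absNeIdx n (-k) = absNeIdx n k := by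
  simp only [absNeIdx, abs_neg]

lemma neg_mem_absNeIdx {n : ℕ} {k a : ℤ} (ha : a ∈ absNeIdx n k) : -a ∈ absNeIdx n k := by
  rw [mem_absNeIdx, abs_neg] at *
  exact ⟨neg_mem_signedIdx ha.1, ha.2⟩

lemma card_absNeIdx {n : ℕ} {k : ℤ} (hk : k ∈ signedIdx n) : #(absNeIdx n k) + 2 = 2 * n := by
  have hk0 : k ≠ 0 := (mem_signedIdx.mp hk).1
  have hpair : (signedIdx n).filter (fun x => ¬|x| ≠ |k|) = {k, -k} := by
    ext a
    simp only [not_not, mem_filter, mem_insert, mem_singleton, abs_eq_abs]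
    constructor
    · exact fun h => h.2
    · rintro (rfl | rfl)
      · exact ⟨hk, Or.inl rfl⟩
      · exact ⟨neg_mem_signedIdx hk, Or.inr rfl⟩
  have hcard : #({k, -k} : Finset ℤ) = 2 := card_pair (by omega)
  rw [← card_signedIdx,
    ← card_filter_add_card_filter_not (s := signedIdx n) (fun x => |x| ≠ |k|), hpair, hcard]
  rfl

lemma QD_apply (n : ℕ) (v : ℤ → ℤ → ℝ) (i j : ℤ) :
    QD n v i j = ∑ a ∈ absNeIdx n j, v a j + ∑ b ∈ absNeIdx n i, v i b :=
  rfl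

lemma QD_congr {n : ℕ} {v w : ℤ → ℤ → ℝ} (h : ∀ a b, memI n a b → v a b = w a b) {i j : ℤ}
    (hi : i ∈ signedIdx n) (hj : j ∈ signedIdx n) : QD n v i j = QD n w i j := by
  rw [QD_apply, QD_apply,
    sum_congr rfl fun a ha => h a j (memI_of_mem_absNeIdx hj ha),
    sum_congr rfl fun b hb => h i b (memI_of_mem_absNeIdx hi hb).symm]

lemma QD_sub_of_odd {n : ℕ} {r : ℤ → ℝ} (hr : ∀ k ∈ signedIdx n, r (-k) = -r k) {i j : ℤ}
    (hi : i ∈ signedIdx n) (hj : j ∈ signedIdx n) :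
    QD n (fun a b => r b - r a) i j = (2 * (n : ℝ) - 2) * (r j - r i) := by
  have hsum : ∀ k, ∑ a ∈ absNeIdx n k, r a = 0 := fun k =>
    sum_eq_zero_of_odd_on (fun a => neg_mem_absNeIdx)
      fun a ha => hr a (mem_absNeIdx.mp ha).1
  have hcard : ∀ k ∈ signedIdx n, (#(absNeIdx n k) : ℝ) = 2 * n - 2 := fun k hk => by
    have := congrArg (Nat.cast : ℕ → ℝ) (card_absNeIdx hk)
    push_cast at this
    linarith
  rw [QD_apply, sum_sub_distrib, sum_sub_distrib, sum_const, sum_const, hsum, hsum,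
    nsmul_eq_mul, nsmul_eq_mul, hcard j hj, hcard i hi]
  ring

section ColumnSums

variable {n : ℕ} {v : ℤ → ℤ → ℝ}

noncomputable def colSum (n : ℕ) (v : ℤ → ℤ → ℝ) (k : ℤ) : ℝ := ∑ a ∈ absNeIdx n k, v a k

lemma rowSum_eq_neg_colSum (hanti : ∀ i j, memI n i j → v j i = -v i j) {k : ℤ}
    (hk : k ∈ signedIdx n) : ∑ b ∈ absNeIdx n k, v k b = -colSum n v k := by
  rw [colSum, ← sum_neg_distrib]
  exact sum_congr rfl fun b hb => hanti b k (memI_of_mem_absNeIdx hk hb)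

lemma colSum_neg (hanti : ∀ i j, memI n i j → v j i = -v i j)
    (hsym : ∀ i j, memI n i j → v (-j) (-i) = v i j) {k : ℤ} (hk : k ∈ signedIdx n) :
    colSum n v (-k) = -colSum n v k := by
  rw [← rowSum_eq_neg_colSum hanti hk, colSum, absNeIdx_neg,
    ← sum_comp_neg_of_neg_mem (fun a => neg_mem_absNeIdx)]
  exact sum_congr rfl fun a ha => hsym k a (memI_of_mem_absNeIdx hk ha).symm

lemma QD_eq_colSum_sub (hanti : ∀ i j, memI n i j → v j i = -v i j) {i : ℤ}
    (hi : i ∈ signedIdx n) (j : ℤ) : QD n v i j = colSum n v j - colSum n v i := by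
  rw [QD_apply, rowSum_eq_neg_colSum hanti hi, sub_eq_add_neg]
  rfl

end ColumnSums

theorem QD_sq_general (n : ℕ) (v : ℤ → ℤ → ℝ)
    (hanti : ∀ i j, memI n i j → v j i = -v i j)
    (hsym : ∀ i j, memI n i j → v (-j) (-i) = v i j) :
    ∀ i j, memI n i j → QD n (QD n v) i j = (2 * (n : ℝ) - 2) * QD n v i j := by
  rintro i j ⟨hi, hj, -⟩
  calc QD n (QD n v) i j = QD n (fun a b => colSum n v b - colSum n v a) i j :=
        QD_congr (fun a b hab => QD_eq_colSum_sub hanti hab.1 b) hi hj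
    _ = (2 * (n : ℝ) - 2) * (colSum n v j - colSum n v i) :=
        QD_sub_of_odd (fun k hk => colSum_neg hanti hsym hk) hi hj
    _ = (2 * (n : ℝ) - 2) * QD n v i j := by rw [QD_eq_colSum_sub hanti hi]

theorem QD_sq (n : ℕ) (hn : 1 ≤ n) (v : ℤ → ℤ → ℝ)
    (hanti : ∀ i j, memI n i j → v j i = -v i j)
    (hsym : ∀ i j, memI n i j → v (-j) (-i) = v i j) :
    ∀ i j, memI n i j → QD n (QD n v) i j = (2 * (n : ℝ) - 2) * QD n v i j :=
  QD_sq_general n v hanti hsym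
end

section
/- Let π be a product of t independent uniformly random reflections in B_n. For i, j ∈ [-n,n]\{0} with j > |i|, P(π(i) > π(j)) = 1/2 - ((j - i - 1 + sgn i)/(2(n-1)))(1 - 2/n)^t + ((j - i - 1 + sgn i)/(2(n-1)) - 1/2)(1 - 4/n + 2/n²)^t. -/
open Classical

/-- The index set `[-n, n] \ {0}` as a finset of integers. -/
noncomputable def signedIdxF (n : ℕ) : Finset ℤ := (Finset.Icc (-(n : ℤ)) n).erase 0

/-- The type of indices `[-n, n] \ {0}`. -/
abbrev SIdx (n : ℕ) := {x : ℤ // x ∈ signedIdxF n}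

/-- Negation on the index set. -/
def negIdx {n : ℕ} (a : SIdx n) : SIdx n :=
  ⟨-a.1, by
    have h := a.2
    simp only [signedIdxF, Finset.mem_erase, Finset.mem_Icc] at h ⊢
    omega⟩

/-- The reflections of `Bₙ` in its signed-permutation representation:
the elements `(i,j)(-i,-j)` with `1 ≤ |i| < j ≤ n` together with
the elements `(i,-i)` with `1 ≤ i ≤ n`. -/
def BRefl (n : ℕ) : Set (Equiv.Perm (SIdx n)) :=
  {π | (∃ a b : SIdx n, a ≠ b ∧ a ≠ negIdx b ∧
          π = Equiv.swap a b * Equiv.swap (negIdx a) (negIdx b))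
     ∨ (∃ a : SIdx n, π = Equiv.swap a (negIdx a))}

/-- The reflections of `Dₙ`: the elements `(i,j)(-i,-j)` with `1 ≤ |i| < j ≤ n`. -/
def DRefl (n : ℕ) : Set (Equiv.Perm (SIdx n)) :=
  {π | ∃ a b : SIdx n, a ≠ b ∧ a ≠ negIdx b ∧
          π = Equiv.swap a b * Equiv.swap (negIdx a) (negIdx b)}

/-- The number of B-inversions: pairs `(i, j)` with `j ≥ |i|` and `π i > π j`. -/
noncomputable def BLen (n : ℕ) (π : Equiv.Perm (SIdx n)) : ℕ :=
  (Finset.univ.filter (fun p : SIdx n × SIdx n =>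
      |p.1.1| ≤ p.2.1 ∧ (π p.2).1 < (π p.1).1)).card

/-- The number of D-inversions: pairs `(i, j)` with `j > |i|` and `π i > π j`. -/
noncomputable def DLen (n : ℕ) (π : Equiv.Perm (SIdx n)) : ℕ :=
  (Finset.univ.filter (fun p : SIdx n × SIdx n =>
      |p.1.1| < p.2.1 ∧ (π p.2).1 < (π p.1).1)).card

/-- The probability that `π i > π j` where `π` is a product of `t` independent
uniformly random reflections in `Bₙ`. -/
noncomputable def BProbGt (n t : ℕ) (i j : SIdx n) : ℝ :=
  ((Finset.univ.filter (fun f : Fin t → Equiv.Perm (SIdx n) =>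
      (∀ k, f k ∈ BRefl n) ∧ ((List.ofFn f).prod j).1 < ((List.ofFn f).prod i).1)).card : ℝ) /
    ((Finset.univ.filter (fun π : Equiv.Perm (SIdx n) => π ∈ BRefl n)).card : ℝ) ^ t

/-!
Peeling off the last factor, the number `N_t(a, b)` of words `π = r₁ ⋯ r_t` of reflections with
`π b < π a` satisfies `N_{t+1}(a, b) = ∑_r N_t(r a, r b)`, so it is governed by the operator
`(T Φ)(a, b) = ∑_r Φ(r a, r b)` on pairs with `a ≠ ±b`. With `m c = c - sgn c`, the functions `1`,
`D(a, b) = m b - m a` and `2(n-1)[b < a] - (n-1) + D` are eigenfunctions of `T` with eigenvalues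
`n²`, `n² - 2n` and `n² - 4n + 2`, and `[b < a]` is a combination of them. The eigenvalue
equations come from counting reflections by their effect on `a` and `b`: exactly one reflection
sends `a` to any given `c ≠ a`, and exactly two move both `a` and `b`.
-/

open Finset Fintype

section Words

variable {G : Type*} [Monoid G]

theorem sum_piFinset_succ_ofFn_prod {M : Type*} [AddCommMonoid M] (S : Finset G) (t : ℕ)
    (φ : G → M) :
    ∑ f ∈ piFinset (fun _ : Fin (t + 1) => S), φ (List.ofFn f).prod =
      ∑ r ∈ S, ∑ f ∈ piFinset (fun _ : Fin t => S), φ ((List.ofFn f).prod * r) := by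
  have h := filter_piFinset_eq_map_snocEquiv (fun _ : Fin (t + 1) => S) (fun _ => True)
  rw [filter_true, filter_true] at h
  rw [h, sum_map, sum_product]
  refine sum_congr rfl fun r _ => sum_congr rfl fun f _ => ?_
  change φ (List.ofFn (Fin.snoc f r)).prod = _
  rw [List.ofFn_succ', List.prod_concat]
  simp only [Fin.snoc_castSucc, Fin.snoc_last]

theorem sum_piFinset_ofFn_prod_smul_eq_pow_mul {X M : Type*} [MulAction G X] [Semiring M]
    (S : Finset G) (V : Set X) (hV : ∀ r ∈ S, ∀ x ∈ V, r • x ∈ V) (Φ : X → M) (c : M)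
    (hΦ : ∀ x ∈ V, ∑ r ∈ S, Φ (r • x) = c * Φ x) (t : ℕ) {x : X} (hx : x ∈ V) :
    ∑ f ∈ piFinset (fun _ : Fin t => S), Φ ((List.ofFn f).prod • x) = c ^ t * Φ x := by
  induction t generalizing x with
  | zero => simp
  | succ t ih =>
    rw [sum_piFinset_succ_ofFn_prod S t (fun g => Φ (g • x))]
    simp only [mul_smul]
    rw [sum_congr rfl fun r hr => ih (hV r hr x hx), ← mul_sum, hΦ x hx, pow_succ, mul_assoc]

end Words

theorem mem_signedIdxF_iff {n : ℕ} {x : ℤ} :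
    x ∈ signedIdxF n ↔ x ≠ 0 ∧ -(n : ℤ) ≤ x ∧ x ≤ n := by
  simp [signedIdxF]

/-- The reflection exchanging `a ↔ c` and `-a ↔ -c`; for `c = -a` it is the sign change
`(a, -a)`. -/
def signedSwapCore (a c d : ℤ) : ℤ :=
  if d = a then c else if d = c then a else if d = -a then -c else if d = -c then -a else d

section SignedSwapCore

variable {a c : ℤ}

theorem signedSwapCore_signedSwapCore (ha : a ≠ 0) (hc : c ≠ 0) (d : ℤ) :
    signedSwapCore a c (signedSwapCore a c d) = d := by
  unfold signedSwapCore; split_ifs <;> omega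

theorem signedSwapCore_neg (ha : a ≠ 0) (hc : c ≠ 0) (d : ℤ) :
    signedSwapCore a c (-d) = -signedSwapCore a c d := by
  unfold signedSwapCore; split_ifs <;> omega

theorem signedSwapCore_mem {n : ℕ} (ha : a ∈ signedIdxF n) (hc : c ∈ signedIdxF n) {d : ℤ}
    (hd : d ∈ signedIdxF n) : signedSwapCore a c d ∈ signedIdxF n := by
  rw [mem_signedIdxF_iff] at *
  unfold signedSwapCore; split_ifs <;> omega

end SignedSwapCore

namespace SIdx

variable {n : ℕ}

theorem coe_ne_zero (a : SIdx n) : a.1 ≠ 0 := (mem_erase.1 a.2).1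

@[simp]
theorem coe_negIdx (a : SIdx n) : (negIdx a).1 = -a.1 := rfl

theorem negIdx_negIdx (a : SIdx n) : negIdx (negIdx a) = a := Subtype.ext (neg_neg a.1)

theorem negIdx_ne_self (a : SIdx n) : negIdx a ≠ a := by
  have := coe_ne_zero a
  rw [ne_eq, Subtype.ext_iff, coe_negIdx]; omega

theorem sign_coe (a : SIdx n) : a.1.sign = if 0 < a.1 then 1 else -1 := by
  rcases lt_or_gt_of_ne (coe_ne_zero a) with h | h
  · rw [Int.sign_eq_neg_one_of_neg h, if_neg h.not_gt]
  · rw [Int.sign_eq_one_of_pos h, if_pos h]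

theorem card_eq : Fintype.card (SIdx n) = 2 * n := by
  rw [Fintype.card_coe, signedIdxF, card_erase_of_mem (by simp), Int.card_Icc]
  omega

end SIdx

open SIdx

def signedSwap {n : ℕ} (a c : SIdx n) : Equiv.Perm (SIdx n) :=
  Function.Involutive.toPerm (fun d => ⟨signedSwapCore a c d, signedSwapCore_mem a.2 c.2 d.2⟩)
    fun d => Subtype.ext (signedSwapCore_signedSwapCore (coe_ne_zero a) (coe_ne_zero c) d)

section SignedSwap

variable {n : ℕ}

@[simp]
theorem coe_signedSwap_apply (a c d : SIdx n) :
    (signedSwap a c d).1 = signedSwapCore a c d := rfl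

theorem signedSwap_apply_left (a c : SIdx n) : signedSwap a c a = c := by
  ext; simp [signedSwapCore]

theorem signedSwap_apply_right (a c : SIdx n) : signedSwap a c c = a := by
  ext; simp only [coe_signedSwap_apply, signedSwapCore]; split_ifs <;> omega

theorem signedSwap_negIdx (a c d : SIdx n) :
    signedSwap a c (negIdx d) = negIdx (signedSwap a c d) :=
  Subtype.ext (signedSwapCore_neg (coe_ne_zero a) (coe_ne_zero c) d)

theorem signedSwap_apply_negIdx_right (a c : SIdx n) :
    signedSwap a c (negIdx c) = negIdx a := by
  rw [signedSwap_negIdx, signedSwap_apply_right]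

theorem swap_mul_swap_negIdx {a b : SIdx n} (h : a ≠ negIdx b) :
    Equiv.swap a b * Equiv.swap (negIdx a) (negIdx b) = signedSwap a b := by
  have := coe_ne_zero a
  have := coe_ne_zero b
  rw [ne_eq, Subtype.ext_iff] at h
  ext d
  rw [Equiv.Perm.mul_apply, Equiv.swap_apply_def, Equiv.swap_apply_def]
  split_ifs <;>
    simp only [Subtype.ext_iff, coe_negIdx, coe_signedSwap_apply, signedSwapCore] at * <;>
    split_ifs <;> omega

theorem swap_negIdx (a : SIdx n) : Equiv.swap a (negIdx a) = signedSwap a (negIdx a) := by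
  have := coe_ne_zero a
  ext d
  rw [Equiv.swap_apply_def]
  split_ifs <;>
    simp only [Subtype.ext_iff, coe_negIdx, coe_signedSwap_apply, signedSwapCore] at * <;>
    split_ifs <;> omega

theorem mem_BRefl_iff {r : Equiv.Perm (SIdx n)} :
    r ∈ BRefl n ↔ ∃ a c, a ≠ c ∧ r = signedSwap a c := by
  constructor
  · rintro (⟨a, b, hab, hab', rfl⟩ | ⟨a, rfl⟩)
    · exact ⟨a, b, hab, swap_mul_swap_negIdx hab'⟩
    · exact ⟨a, negIdx a, (negIdx_ne_self a).symm, swap_negIdx a⟩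
  · rintro ⟨a, c, hac, rfl⟩
    by_cases hc : a = negIdx c
    · refine Or.inr ⟨a, ?_⟩
      rw [swap_negIdx, hc, negIdx_negIdx]
    · exact Or.inl ⟨a, c, hac, hc, (swap_mul_swap_negIdx hc).symm⟩

theorem signedSwap_eq_of_apply_ne {a c d : SIdx n} (h : signedSwap a c d ≠ d) :
    signedSwap d (signedSwap a c d) = signedSwap a c := by
  have := coe_ne_zero a
  have := coe_ne_zero c
  have := coe_ne_zero d
  rw [ne_eq, Subtype.ext_iff] at h
  ext e
  simp only [coe_signedSwap_apply, signedSwapCore] at *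
  split_ifs at * <;> omega

end SignedSwap

section Reflections

variable {n : ℕ}

noncomputable def reflFinset (n : ℕ) : Finset (Equiv.Perm (SIdx n)) := univ.filter (· ∈ BRefl n)

theorem signedSwap_mem_reflFinset {a c : SIdx n} (h : a ≠ c) : signedSwap a c ∈ reflFinset n :=
  mem_filter.2 ⟨mem_univ _, mem_BRefl_iff.2 ⟨a, c, h, rfl⟩⟩

theorem eq_signedSwap_of_mem_reflFinset {r : Equiv.Perm (SIdx n)} (hr : r ∈ reflFinset n)
    {d : SIdx n} (hd : r d ≠ d) : r = signedSwap d (r d) := by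
  obtain ⟨a, c, -, rfl⟩ := mem_BRefl_iff.1 (mem_filter.1 hr).2
  exact (signedSwap_eq_of_apply_ne hd).symm

theorem apply_negIdx_of_mem_reflFinset {r : Equiv.Perm (SIdx n)} (hr : r ∈ reflFinset n)
    (d : SIdx n) : r (negIdx d) = negIdx (r d) := by
  obtain ⟨a, c, -, rfl⟩ := mem_BRefl_iff.1 (mem_filter.1 hr).2
  exact signedSwap_negIdx a c d

/-- Every reflection is `signedSwap d c` for exactly one of these pairs: `d` is the largest
index it moves. -/
noncomputable def topPairs (n : ℕ) : Finset (SIdx n × SIdx n) :=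
  univ.filter fun p => -p.1.1 ≤ p.2.1 ∧ p.2.1 ≤ p.1.1 ∧ p.1 ≠ p.2

theorem mem_topPairs {p : SIdx n × SIdx n} :
    p ∈ topPairs n ↔ -p.1.1 ≤ p.2.1 ∧ p.2.1 ≤ p.1.1 ∧ p.1.1 ≠ p.2.1 := by
  simp only [topPairs, mem_filter, mem_univ, true_and, ne_eq, Subtype.ext_iff]

theorem reflFinset_eq_image_topPairs :
    reflFinset n = (topPairs n).image fun p => signedSwap p.1 p.2 := by
  ext r
  simp only [mem_image, Prod.exists, mem_topPairs]
  constructor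
  · intro hr
    obtain ⟨a, c, hac, rfl⟩ := mem_BRefl_iff.1 (mem_filter.1 hr).2
    have ha := mem_signedIdxF_iff.1 a.2
    have hc := mem_signedIdxF_iff.1 c.2
    have hac' : a.1 ≠ c.1 := fun h => hac (Subtype.ext h)
    let d : SIdx n := ⟨max (max a.1 (-a.1)) (max c.1 (-c.1)), mem_signedIdxF_iff.2 (by omega)⟩
    have hd : signedSwap a c d ≠ d := by
      rw [ne_eq, Subtype.ext_iff, coe_signedSwap_apply, signedSwapCore]
      split_ifs <;> simp only [d] at * <;> omega
    refine ⟨d, signedSwap a c d, ⟨?_, ?_, fun h => hd (Subtype.ext h).symm⟩,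
      signedSwap_eq_of_apply_ne hd⟩ <;>
    · simp only [coe_signedSwap_apply, signedSwapCore, d]
      split_ifs <;> omega
  · rintro ⟨d, c, ⟨-, -, hdc⟩, rfl⟩
    exact signedSwap_mem_reflFinset fun h => hdc (congrArg Subtype.val h)

theorem injOn_signedSwap_topPairs :
    Set.InjOn (fun p : SIdx n × SIdx n => signedSwap p.1 p.2) (topPairs n) := by
  rintro ⟨d, c⟩ hp ⟨d', c'⟩ hp' h
  rw [mem_coe, mem_topPairs] at hp hp'
  dsimp only at hp hp'
  have h1 := congrArg (fun r => (r d).1) h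
  have h2 := congrArg (fun r => (r d').1) h
  simp only [coe_signedSwap_apply, signedSwapCore] at h1 h2
  simp only [Prod.mk.injEq, Subtype.ext_iff]
  split_ifs at h1 h2 <;> omega

/-- `(d, c) ↦ (c, d)` for `c > 0` and `(d, -c)` for `c < 0` is a bijection onto `[1, n]²`. -/
theorem card_topPairs : (topPairs n).card = n ^ 2 := by
  have hcard : (topPairs n).card = (Icc (1 : ℤ) n ×ˢ Icc (1 : ℤ) n).card := by
    refine card_nbij (fun p => if 0 < p.2.1 then (p.2.1, p.1.1) else (p.1.1, -p.2.1)) ?_ ?_ ?_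
    · rintro ⟨d, c⟩ hp
      have := mem_signedIdxF_iff.1 c.2
      have := mem_signedIdxF_iff.1 d.2
      rw [mem_coe, mem_topPairs] at hp
      rw [mem_coe, mem_product, mem_Icc, mem_Icc]
      dsimp only at hp ⊢
      split_ifs <;> omega
    · rintro ⟨d, c⟩ hp ⟨d', c'⟩ hp' h
      rw [mem_coe, mem_topPairs] at hp hp'
      have := mem_signedIdxF_iff.1 c.2
      have := mem_signedIdxF_iff.1 c'.2
      simp only [Prod.mk.injEq, Subtype.ext_iff]
      dsimp only at hp hp' h
      split_ifs at h <;> simp only [Prod.mk.injEq] at h <;> omega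
    · rintro ⟨x, y⟩ hxy
      rw [mem_coe, mem_product, mem_Icc, mem_Icc] at hxy
      by_cases hlt : x < y
      · refine ⟨(⟨y, mem_signedIdxF_iff.2 (by omega)⟩, ⟨x, mem_signedIdxF_iff.2 (by omega)⟩),
          mem_topPairs.2 (by dsimp only; omega), ?_⟩
        simp only [if_pos (show (0 : ℤ) < x by omega)]
      · refine ⟨(⟨x, mem_signedIdxF_iff.2 (by omega)⟩, ⟨-y, mem_signedIdxF_iff.2 (by omega)⟩),
          mem_topPairs.2 (by dsimp only; omega), ?_⟩
        simp only [if_neg (show ¬(0 : ℤ) < -y by omega), neg_neg]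
  rw [hcard, card_product, Int.card_Icc]
  simp [sq]

theorem card_reflFinset : (reflFinset n).card = n ^ 2 := by
  rw [reflFinset_eq_image_topPairs, card_image_of_injOn injOn_signedSwap_topPairs, card_topPairs]

theorem sum_filter_apply_ne_reflFinset {M : Type*} [AddCommMonoid M] (x : SIdx n)
    (H : Equiv.Perm (SIdx n) → M) :
    ∑ r ∈ (reflFinset n).filter (fun r => r x ≠ x), H r =
      ∑ c ∈ univ.erase x, H (signedSwap x c) :=
  sum_nbij' (fun r => r x) (signedSwap x)
    (fun r hr => mem_erase.2 ⟨(mem_filter.1 hr).2, mem_univ _⟩)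
    (fun c hc => mem_filter.2 ⟨signedSwap_mem_reflFinset (mem_erase.1 hc).1.symm, by
      rw [signedSwap_apply_left]; exact (mem_erase.1 hc).1⟩)
    (fun r hr => (eq_signedSwap_of_mem_reflFinset (mem_filter.1 hr).1 (mem_filter.1 hr).2).symm)
    (fun c _ => signedSwap_apply_left x c)
    (fun r hr => by rw [← eq_signedSwap_of_mem_reflFinset (mem_filter.1 hr).1 (mem_filter.1 hr).2])

theorem card_filter_apply_ne_reflFinset (x : SIdx n) :
    ((reflFinset n).filter (fun r => r x ≠ x)).card = 2 * n - 1 := by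
  rw [card_eq_sum_ones, sum_filter_apply_ne_reflFinset x (fun _ => 1), ← card_eq_sum_ones,
    card_erase_of_mem (mem_univ x), card_univ, SIdx.card_eq]

theorem sum_reflFinset_apply (f : SIdx n → ℤ) (x : SIdx n) :
    ∑ r ∈ reflFinset n, f (r x) = ((n : ℤ) ^ 2 - 2 * n) * f x + ∑ c, f c := by
  rw [← sum_filter_add_sum_filter_not _ (fun r => r x ≠ x),
    sum_filter_apply_ne_reflFinset x (fun r => f (r x))]
  simp only [signedSwap_apply_left, ne_eq, not_not]
  rw [sum_congr rfl fun r hr => congrArg f (mem_filter.1 hr).2, sum_const,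
    ← sum_erase_add _ f (mem_univ x)]
  have hcard := card_filter_add_card_filter_not (s := reflFinset n) (fun r => r x ≠ x)
  have hn : 1 ≤ n := by have := mem_signedIdxF_iff.1 x.2; omega
  simp only [ne_eq, not_not] at hcard
  rw [card_reflFinset, card_filter_apply_ne_reflFinset] at hcard
  zify [show 1 ≤ 2 * n by omega] at hcard
  rw [nsmul_eq_mul, show (((reflFinset n).filter (fun r => r x = x)).card : ℤ) =
    n ^ 2 - (2 * n - 1) by omega]
  ring

theorem filter_apply_ne_and_apply_ne_reflFinset {a b : SIdx n} (hab : a ≠ b)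
    (hab' : a ≠ negIdx b) :
    (reflFinset n).filter (fun r => r a ≠ a ∧ r b ≠ b) =
      {signedSwap a b, signedSwap a (negIdx b)} := by
  have := coe_ne_zero a
  have := coe_ne_zero b
  ext r
  rw [mem_filter, mem_insert, mem_singleton]
  constructor
  · rintro ⟨hr, hra, hrb⟩
    rw [eq_signedSwap_of_mem_reflFinset hr hra] at hrb ⊢
    rw [ne_eq, Subtype.ext_iff] at hab hab' hrb
    simp only [coe_signedSwap_apply, coe_negIdx, signedSwapCore] at hab' hrb
    have hra' : (r a).1 = b.1 ∨ (r a).1 = (negIdx b).1 := by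
      rw [coe_negIdx]; split_ifs at hrb <;> omega
    rcases hra' with h | h
    · exact Or.inl (by rw [Subtype.ext h])
    · exact Or.inr (by rw [Subtype.ext h])
  · rintro (rfl | rfl)
    · refine ⟨signedSwap_mem_reflFinset hab, ?_, ?_⟩
      · rw [signedSwap_apply_left]; exact hab.symm
      · rw [signedSwap_apply_right]; exact hab
    · refine ⟨signedSwap_mem_reflFinset hab', ?_, ?_⟩
      · rw [signedSwap_apply_left]; exact hab'.symm
      · rw [ne_eq, Subtype.ext_iff] at hab hab' ⊢
        simp only [coe_signedSwap_apply, coe_negIdx, signedSwapCore] at hab' ⊢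
        split_ifs <;> omega

theorem sum_reflFinset_apply_apply (F : SIdx n → SIdx n → ℤ) {a b : SIdx n} (hab : a ≠ b)
    (hab' : a ≠ negIdx b) :
    ∑ r ∈ reflFinset n, F (r a) (r b) =
      ((n : ℤ) ^ 2 - 4 * n) * F a b + ∑ c, F c b + ∑ c, F a c
        + (F b a - F b b - F a a + F a b)
        + (F (negIdx b) (negIdx a) - F (negIdx b) b - F a (negIdx a) + F a b) := by
  have hne : signedSwap a b ≠ signedSwap a (negIdx b) := fun h => negIdx_ne_self b <| by
    rw [← signedSwap_apply_left a (negIdx b), ← h, signedSwap_apply_left]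
  -- the second difference vanishes unless `r` moves both `a` and `b`
  have hcross : ∑ r ∈ reflFinset n, (F (r a) (r b) - F (r a) b - F a (r b) + F a b) =
      (F b a - F b b - F a a + F a b)
        + (F (negIdx b) (negIdx a) - F (negIdx b) b - F a (negIdx a) + F a b) := by
    rw [← sum_filter_of_ne (p := fun r => r a ≠ a ∧ r b ≠ b),
      filter_apply_ne_and_apply_ne_reflFinset hab hab', sum_pair hne]
    · have hb := signedSwap_apply_negIdx_right a (negIdx b)
      rw [negIdx_negIdx] at hb
      simp only [signedSwap_apply_left, signedSwap_apply_right, hb]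
    · intro r _ h
      refine ⟨fun ha => h ?_, fun hb => h ?_⟩
      · rw [ha]; ring
      · rw [hb]; ring
  have h1 := sum_reflFinset_apply (fun c => F c b) a
  have h2 := sum_reflFinset_apply (fun c => F a c) b
  simp only [sum_add_distrib, sum_sub_distrib, sum_const, card_reflFinset, nsmul_eq_mul] at hcross
  push_cast at hcross
  linear_combination hcross + h1 + h2

end Reflections

section Eigenfunctions

variable {n : ℕ}

def inversionInd (p : SIdx n × SIdx n) : ℤ := if p.2.1 < p.1.1 then 1 else 0

def signedGap (p : SIdx n × SIdx n) : ℤ := (p.2.1 - p.2.1.sign) - (p.1.1 - p.1.1.sign)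

def inversionEigen (n : ℕ) (p : SIdx n × SIdx n) : ℤ :=
  2 * ((n : ℤ) - 1) * inversionInd p - ((n : ℤ) - 1) + signedGap p

def genericPairs (n : ℕ) : Set (SIdx n × SIdx n) := {p | p.1 ≠ p.2 ∧ p.1 ≠ negIdx p.2}

theorem smul_mem_genericPairs {r : Equiv.Perm (SIdx n)} (hr : r ∈ reflFinset n)
    {p : SIdx n × SIdx n} (hp : p ∈ genericPairs n) : r • p ∈ genericPairs n := by
  refine ⟨fun h => hp.1 (r.injective h), fun h => hp.2 (r.injective ?_)⟩
  rw [apply_negIdx_of_mem_reflFinset hr]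
  exact h

theorem sum_ite_coe_lt_coe (b : SIdx n) :
    ∑ c : SIdx n, (if b.1 < c.1 then (1 : ℤ) else 0) = n - b.1 - if b.1 < 0 then 1 else 0 := by
  have hb := mem_signedIdxF_iff.1 b.2
  rw [sum_coe_sort (signedIdxF n) (fun c => if b.1 < c then (1 : ℤ) else 0), sum_boole]
  have hfilter : (signedIdxF n).filter (fun c => b.1 < c) = (Ioc b.1 n).erase 0 := by
    ext c
    simp only [mem_filter, mem_signedIdxF_iff, mem_erase, mem_Ioc]
    omega
  rw [hfilter]
  split_ifs with h
  · rw [card_erase_of_mem (mem_Ioc.2 (by omega)), Int.card_Ioc]; omega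
  · rw [erase_eq_of_notMem (fun h' => by rw [mem_Ioc] at h'; omega), Int.card_Ioc]; omega

theorem sum_ite_coe_lt (a : SIdx n) :
    ∑ c : SIdx n, (if c.1 < a.1 then (1 : ℤ) else 0) = n + a.1 - if 0 < a.1 then 1 else 0 := by
  have hneg : Function.Involutive (negIdx (n := n)) := negIdx_negIdx
  have h := sum_ite_coe_lt_coe (negIdx a)
  rw [← Equiv.sum_comp hneg.toPerm] at h
  simp only [Function.Involutive.coe_toPerm, coe_negIdx, neg_lt_neg_iff, neg_lt_zero,
    sub_neg_eq_add] at h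
  exact h

theorem sum_reflFinset_signedGap_smul (p : SIdx n × SIdx n) :
    ∑ r ∈ reflFinset n, signedGap (r • p) = ((n : ℤ) ^ 2 - 2 * n) * signedGap p := by
  have h1 := sum_reflFinset_apply (fun c => c.1 - c.1.sign) p.1
  have h2 := sum_reflFinset_apply (fun c => c.1 - c.1.sign) p.2
  simp only [signedGap, Prod.smul_fst, Prod.smul_snd, Equiv.Perm.smul_def]
  simp only [sum_sub_distrib] at h1 h2 ⊢
  linear_combination h2 - h1

theorem sum_reflFinset_inversionInd_smul {a b : SIdx n} (hab : a ≠ b) (hab' : a ≠ negIdx b) :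
    ∑ r ∈ reflFinset n, inversionInd (r • (a, b)) =
      ((n : ℤ) ^ 2 - 4 * n + 2) * inversionInd (a, b) + 2 * n - 1 - signedGap (a, b) := by
  have hsum := sum_reflFinset_apply_apply (fun x y => inversionInd (x, y)) hab hab'
  simp only [Prod.smul_mk, Equiv.Perm.smul_def, inversionInd] at hsum ⊢
  rw [hsum, sum_ite_coe_lt_coe, sum_ite_coe_lt]
  have := coe_ne_zero a
  have := coe_ne_zero b
  rw [ne_eq, Subtype.ext_iff] at hab hab'
  simp only [signedGap, sign_coe, coe_negIdx] at hab' ⊢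
  generalize (n : ℤ) ^ 2 = N
  split_ifs <;> omega

theorem sum_reflFinset_inversionEigen_smul {p : SIdx n × SIdx n} (hp : p ∈ genericPairs n) :
    ∑ r ∈ reflFinset n, inversionEigen n (r • p) =
      ((n : ℤ) ^ 2 - 4 * n + 2) * inversionEigen n p := by
  have h1 := sum_reflFinset_inversionInd_smul hp.1 hp.2
  have h2 := sum_reflFinset_signedGap_smul p
  simp only [inversionEigen, sum_add_distrib, sum_sub_distrib, ← mul_sum, sum_const,
    card_reflFinset, nsmul_eq_mul]
  push_cast
  linear_combination 2 * ((n : ℤ) - 1) * h1 + h2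

theorem two_mul_sum_inversionInd (t : ℕ) {p : SIdx n × SIdx n} (hp : p ∈ genericPairs n) :
    2 * ((n : ℤ) - 1) * ∑ f ∈ piFinset (fun _ : Fin t => reflFinset n),
        inversionInd ((List.ofFn f).prod • p) =
      ((n : ℤ) - 1) * ((n : ℤ) ^ 2) ^ t - ((n : ℤ) ^ 2 - 2 * n) ^ t * signedGap p
        + ((n : ℤ) ^ 2 - 4 * n + 2) ^ t * inversionEigen n p := by
  have hone := sum_piFinset_ofFn_prod_smul_eq_pow_mul (reflFinset n) Set.univ
    (fun _ _ _ _ => Set.mem_univ _) (fun _ => (1 : ℤ)) ((n : ℤ) ^ 2)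
    (fun _ _ => by rw [sum_const, card_reflFinset]; simp) t (Set.mem_univ p)
  have hgap := sum_piFinset_ofFn_prod_smul_eq_pow_mul (reflFinset n) Set.univ
    (fun _ _ _ _ => Set.mem_univ _) signedGap _ (fun p _ => sum_reflFinset_signedGap_smul p) t
    (Set.mem_univ p)
  have heigen := sum_piFinset_ofFn_prod_smul_eq_pow_mul (reflFinset n) (genericPairs n)
    (fun _ hr _ hp => smul_mem_genericPairs hr hp) (inversionEigen n) _
    (fun _ hp => sum_reflFinset_inversionEigen_smul hp) t hp
  have hsplit : ∀ q : SIdx n × SIdx n, 2 * ((n : ℤ) - 1) * inversionInd q =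
      inversionEigen n q + ((n : ℤ) - 1) * 1 - signedGap q := by
    intro q; rw [inversionEigen]; ring
  rw [mul_sum]
  simp only [hsplit, sum_add_distrib, sum_sub_distrib, ← mul_sum]
  rw [hone, hgap, heigen]
  ring

end Eigenfunctions

theorem card_filter_eq_sum_inversionInd {n : ℕ} (t : ℕ) (i j : SIdx n) :
    ((univ.filter (fun f : Fin t → Equiv.Perm (SIdx n) =>
      (∀ k, f k ∈ BRefl n) ∧ ((List.ofFn f).prod j).1 < ((List.ofFn f).prod i).1)).card : ℤ) =
    ∑ f ∈ piFinset (fun _ : Fin t => reflFinset n), inversionInd ((List.ofFn f).prod • (i, j)) := by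
  have hwords : univ.filter (fun f : Fin t → Equiv.Perm (SIdx n) => ∀ k, f k ∈ BRefl n) =
      piFinset (fun _ => reflFinset n) := by
    ext f; simp [reflFinset]
  rw [← filter_filter, hwords, card_filter]
  push_cast
  rfl

theorem two_mul_card_filter_inversion {n : ℕ} (t : ℕ) {i j : SIdx n} (hij : |i.1| < j.1) :
    2 * ((n : ℤ) - 1) * ((univ.filter (fun f : Fin t → Equiv.Perm (SIdx n) =>
      (∀ k, f k ∈ BRefl n) ∧ ((List.ofFn f).prod j).1 < ((List.ofFn f).prod i).1)).card : ℤ) =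
      ((n : ℤ) - 1) * ((n : ℤ) ^ 2) ^ t - ((n : ℤ) ^ 2 - 2 * n) ^ t * (j.1 - i.1 - 1 + i.1.sign)
        + ((n : ℤ) ^ 2 - 4 * n + 2) ^ t * (j.1 - i.1 - 1 + i.1.sign - ((n : ℤ) - 1)) := by
  have hij' := abs_lt.1 hij
  have hgeneric : (i, j) ∈ genericPairs n := by
    refine ⟨fun h => ?_, fun h => ?_⟩ <;>
    · rw [Subtype.ext_iff] at h
      simp only [coe_negIdx] at h
      omega
  have hgap : signedGap (i, j) = j.1 - i.1 - 1 + i.1.sign := by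
    simp only [signedGap, Int.sign_eq_one_of_pos (show 0 < j.1 by omega)]; ring
  have hind : inversionInd (i, j) = 0 := if_neg (show ¬j.1 < i.1 by omega)
  rw [card_filter_eq_sum_inversionInd, two_mul_sum_inversionInd t hgeneric, inversionEigen, hgap,
    hind]
  ring

theorem prob_inversion_reflections_B_general (n t : ℕ)
    (i j : SIdx n) (hij : |i.1| < j.1) :
    BProbGt n t i j =
      1 / 2
      - ((j.1 - i.1 - 1 + i.1.sign : ℤ) : ℝ) / (2 * ((n : ℝ) - 1)) * (1 - 2 / n) ^ t
      + (((j.1 - i.1 - 1 + i.1.sign : ℤ) : ℝ) / (2 * ((n : ℝ) - 1)) - 1 / 2) *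
          (1 - 4 / n + 2 / (n : ℝ) ^ 2) ^ t := by
  have hn : (2 : ℝ) ≤ n := by
    have := mem_signedIdxF_iff.1 i.2
    have := mem_signedIdxF_iff.1 j.2
    have := abs_lt.1 hij
    exact_mod_cast (show 2 ≤ (n : ℤ) by omega)
  have hcount := congrArg (Int.cast : ℤ → ℝ) (two_mul_card_filter_inversion t hij)
  push_cast at hcount
  have h1 : (1 - 2 / n : ℝ) = ((n : ℝ) ^ 2 - 2 * n) / (n : ℝ) ^ 2 := by field_simp
  have h2 : (1 - 4 / n + 2 / (n : ℝ) ^ 2) = ((n : ℝ) ^ 2 - 4 * n + 2) / (n : ℝ) ^ 2 := by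
    field_simp
  have hn1 : (n : ℝ) - 1 ≠ 0 := by linarith
  rw [BProbGt, ← reflFinset, card_reflFinset, h1, h2, div_pow, div_pow]
  push_cast
  field_simp
  linear_combination hcount

theorem prob_inversion_reflections_B (n t : ℕ) (hn : 2 ≤ n)
    (i j : SIdx n) (hij : |i.1| < j.1) :
    BProbGt n t i j =
      1 / 2
      - ((j.1 - i.1 - 1 + i.1.sign : ℤ) : ℝ) / (2 * ((n : ℝ) - 1)) * (1 - 2 / n) ^ t
      + (((j.1 - i.1 - 1 + i.1.sign : ℤ) : ℝ) / (2 * ((n : ℝ) - 1)) - 1 / 2) *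
          (1 - 4 / n + 2 / (n : ℝ) ^ 2) ^ t :=
  prob_inversion_reflections_B_general n t i j hij
end
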